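/- arXiv:2502.07198 — 8 statements merged into one kernel-verified Lean document; each statement's English description precedes it below -/
import Mathlib

section
/- Let S be a nonempty collection of 312-avoiding TITOs. Then there exists a 312-avoiding TITO ≼* whose inversion set is exactly the intersection of the inversion sets of the members of S, i.e., Inv(≼*) = ⋂_{≼ ∈ S} Inv(≼). Explicitly, the relation ≼* defined by: a ≼* a for all a; for a < b, b ≼* a if (a, b) ∈ ⋂_{≼ ∈ S} Inv(≼) and a ≼* b otherwise, is such a TITO (in particular this relation is transitive). -/
structure TITO (n : ℕ) where
  rel : ℤ → ℤ → Prop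
  refl : ∀ a, rel a a
  antisymm : ∀ a b, rel a b → rel b a → a = b
  trans : ∀ a b c, rel a b → rel b c → rel a c
  total : ∀ a b, rel a b ∨ rel b a
  invariant : ∀ a b, rel a b ↔ rel (a + n) (b + n)

namespace TITO

variable {n : ℕ}

/-- The inversion set of a TITO. -/
def Inversions (t : TITO n) : Set (ℤ × ℤ) := {p | p.1 < p.2 ∧ t.rel p.2 p.1}

/-- A TITO is 312-avoiding if there are no integers `a < b < c` with `c ≼ a` and `a ≼ b`. -/
def Avoids312 (t : TITO n) : Prop :=
  ¬ ∃ a b c : ℤ, a < b ∧ b < c ∧ t.rel c a ∧ t.rel a b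

/-- A TITO is 132-avoiding if there are no integers `a < b < c` with `a ≼ c` and `c ≼ b`. -/
def Avoids132 (t : TITO n) : Prop :=
  ¬ ∃ a b c : ℤ, a < b ∧ b < c ∧ t.rel a c ∧ t.rel c b

/-- A set is order-convex for a TITO. -/
def OrderConvex (t : TITO n) (S : Set ℤ) : Prop :=
  ∀ x ∈ S, ∀ z ∈ S, ∀ y : ℤ, t.rel x y → t.rel y z → y ∈ S

/-- A block of a TITO: an order-convex set with no minimal and no maximal element in which
all intervals are finite. -/
def IsBlock (t : TITO n) (I : Set ℤ) : Prop :=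
  t.OrderConvex I ∧
  (∀ a ∈ I, ∃ b ∈ I, b ≠ a ∧ t.rel b a) ∧
  (∀ a ∈ I, ∃ b ∈ I, b ≠ a ∧ t.rel a b) ∧
  (∀ a ∈ I, ∀ c ∈ I, t.rel a c → {b : ℤ | t.rel a b ∧ t.rel b c}.Finite)

/-- A block is waxing if `a ≼ a + n` for every `a` in it. -/
def Waxing (t : TITO n) (I : Set ℤ) : Prop := ∀ a ∈ I, t.rel a (a + n)

/-- A block is waning if `a + n ≼ a` for every `a` in it. -/
def Waning (t : TITO n) (I : Set ℤ) : Prop := ∀ a ∈ I, t.rel (a + n) a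

/-- A TITO is real if `a ≼ a + n` whenever the residue class of `a` mod `n` is order-convex. -/
def IsReal (t : TITO n) : Prop :=
  ∀ a : ℤ, t.OrderConvex {x : ℤ | ∃ k : ℤ, x = a + k * n} → t.rel a (a + n)

/-- A TITO is co-real if `a + n ≼ a` whenever the residue class of `a` mod `n` is order-convex. -/
def IsCoReal (t : TITO n) : Prop :=
  ∀ a : ℤ, t.OrderConvex {x : ℤ | ∃ k : ℤ, x = a + k * n} → t.rel (a + n) a

/-- `(a, b)` with `a < b` is a lower wall if `b ≼ a` is a cover relation of the total order. -/
def LowerWall (t : TITO n) (a b : ℤ) : Prop :=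
  a < b ∧ t.rel b a ∧ ∀ z : ℤ, z ≠ a → z ≠ b → ¬ (t.rel b z ∧ t.rel z a)

end TITO

theorem stmt2 (n : ℕ) (hn : 2 ≤ n) (S : Set (TITO n)) (hS : S.Nonempty)
    (h312 : ∀ t ∈ S, t.Avoids312) :
    ∃ tstar : TITO n, tstar.Avoids312 ∧
      tstar.Inversions = (⋂ t ∈ S, TITO.Inversions t) ∧
      (∀ a b : ℤ, tstar.rel a b ↔
        (a = b ∨ (a < b ∧ (a, b) ∉ ⋂ t ∈ S, TITO.Inversions t) ∨
          (b < a ∧ (b, a) ∈ ⋂ t ∈ S, TITO.Inversions t))) := by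
  classical
  set I : Set (ℤ × ℤ) := ⋂ t ∈ S, TITO.Inversions t with hIdef
  have hmem : ∀ a b : ℤ, (a, b) ∈ I ↔ a < b ∧ ∀ t ∈ S, t.rel b a := by
    intro a b
    simp only [hIdef, Set.mem_iInter, TITO.Inversions, Set.mem_setOf_eq]
    constructor
    · intro h
      obtain ⟨t0, ht0⟩ := hS
      exact ⟨(h t0 ht0).1, fun t ht => (h t ht).2⟩
    · rintro ⟨h1, h2⟩ t ht; exact ⟨h1, h2 t ht⟩
  have h312' : ∀ t ∈ S, ∀ a b c : ℤ, a < b → b < c → t.rel c a → t.rel a b → False :=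
    fun t ht a b c h1 h2 h3 h4 => h312 t ht ⟨a, b, c, h1, h2, h3, h4⟩
  have htot : ∀ t : TITO n, ∀ x y : ℤ, ¬ t.rel x y → t.rel y x := by
    intro t x y h
    rcases t.total x y with h' | h'
    · exact absurd h' h
    · exact h'
  -- from ¬(a,b)∈I with a<b get t with t.rel a b
  have hwit : ∀ a b : ℤ, a < b → (a, b) ∉ I → ∃ t ∈ S, t.rel a b := by
    intro a b hab h
    rw [hmem] at h
    push_neg at h
    obtain ⟨t, ht, ht'⟩ := h hab
    exact ⟨t, ht, htot t b a ht'⟩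
  let R : ℤ → ℤ → Prop := fun a b =>
    a = b ∨ (a < b ∧ (a, b) ∉ I) ∨ (b < a ∧ (b, a) ∈ I)
  have hrefl : ∀ a, R a a := fun a => Or.inl rfl
  have hantisymm : ∀ a b, R a b → R b a → a = b := by
    intro a b hab hba
    rcases hab with h | ⟨h1, h2⟩ | ⟨h1, h2⟩
    · exact h
    · rcases hba with h | ⟨h1', h2'⟩ | ⟨h1', h2'⟩
      · exact h.symm
      · exact absurd h1 (not_lt.2 h1'.le)
      · exact absurd h2' h2
    · rcases hba with h | ⟨h1', h2'⟩ | ⟨h1', h2'⟩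
      · exact h.symm
      · exact absurd h2 h2'
      · exact absurd h1 (not_lt.2 h1'.le)
  have htotal : ∀ a b, R a b ∨ R b a := by
    intro a b
    rcases lt_trichotomy a b with h | h | h
    · by_cases hI : (a, b) ∈ I
      · exact Or.inr (Or.inr (Or.inr ⟨h, hI⟩))
      · exact Or.inl (Or.inr (Or.inl ⟨h, hI⟩))
    · exact Or.inl (Or.inl h)
    · by_cases hI : (b, a) ∈ I
      · exact Or.inl (Or.inr (Or.inr ⟨h, hI⟩))
      · exact Or.inr (Or.inr (Or.inl ⟨h, hI⟩))
  have htrans : ∀ a b c, R a b → R b c → R a c := by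
    intro a b c hab hbc
    rcases hab with rfl | ⟨hab1, hab2⟩ | ⟨hab1, hab2⟩
    · exact hbc
    · rcases hbc with rfl | ⟨hbc1, hbc2⟩ | ⟨hbc1, hbc2⟩
      · exact Or.inr (Or.inl ⟨hab1, hab2⟩)
      · -- a < b, ¬I(a,b); b < c, ¬I(b,c); show a ≼* c with a<c
        refine Or.inr (Or.inl ⟨hab1.trans hbc1, fun hac => ?_⟩)
        obtain ⟨t, ht, hrab⟩ := hwit a b hab1 hab2
        exact h312' t ht a b c hab1 hbc1 (((hmem a c).1 hac).2 t ht) hrab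
      · -- a < b, ¬I(a,b); c < b, I(c,b)
        rcases lt_trichotomy a c with h | rfl | h
        · refine Or.inr (Or.inl ⟨h, fun hac => ?_⟩)
          obtain ⟨t, ht, hrab⟩ := hwit a b hab1 hab2
          have hca := ((hmem a c).1 hac).2 t ht
          have hbc := ((hmem c b).1 hbc2).2 t ht
          have : t.rel c b := t.trans c a b hca hrab
          have : c = b := t.antisymm c b this hbc
          exact absurd this (ne_of_lt hbc1)
        · exact Or.inl rfl
        · refine Or.inr (Or.inr ⟨h, (hmem c a).2 ⟨h, fun t ht => ?_⟩⟩)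
          by_contra hac
          have hca := htot t a c hac
          have hbc := ((hmem c b).1 hbc2).2 t ht
          exact h312' t ht c a b h hab1 hbc hca
    · rcases hbc with rfl | ⟨hbc1, hbc2⟩ | ⟨hbc1, hbc2⟩
      · exact Or.inr (Or.inr ⟨hab1, hab2⟩)
      · -- b < a, I(b,a); b < c, ¬I(b,c)
        obtain ⟨t0, ht0, hrbc⟩ := hwit b c hbc1 hbc2
        have hrab : t0.rel a b := ((hmem b a).1 hab2).2 t0 ht0
        rcases lt_trichotomy a c with h | rfl | h
        · refine Or.inr (Or.inl ⟨h, fun hac => ?_⟩)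
          have hca := ((hmem a c).1 hac).2 t0 ht0
          have : t0.rel a c := t0.trans a b c hrab hrbc
          have : a = c := t0.antisymm a c this hca
          exact absurd this (ne_of_lt h)
        · exact Or.inl rfl
        · exact absurd hrab (fun h' => h312' t0 ht0 b c a hbc1 h h' hrbc)
      · -- b < a, I(b,a); c < b, I(c,b)
        refine Or.inr (Or.inr ⟨hbc1.trans hab1, (hmem c a).2 ⟨hbc1.trans hab1, fun t ht => ?_⟩⟩)
        exact t.trans a b c (((hmem b a).1 hab2).2 t ht) (((hmem c b).1 hbc2).2 t ht)
  have hinv : ∀ a b : ℤ, R a b ↔ R (a + n) (b + n) := by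
    have hIshift : ∀ a b : ℤ, (a, b) ∈ I ↔ (a + n, b + n) ∈ I := by
      intro a b
      rw [hmem, hmem]
      constructor
      · rintro ⟨h1, h2⟩
        exact ⟨by omega, fun t ht => (t.invariant b a).1 (h2 t ht)⟩
      · rintro ⟨h1, h2⟩
        exact ⟨by omega, fun t ht => (t.invariant b a).2 (h2 t ht)⟩
    intro a b
    constructor
    · rintro (rfl | ⟨h1, h2⟩ | ⟨h1, h2⟩)
      · exact Or.inl rfl
      · exact Or.inr (Or.inl ⟨by omega, fun h => h2 ((hIshift a b).2 h)⟩)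
      · exact Or.inr (Or.inr ⟨by omega, (hIshift b a).1 h2⟩)
    · rintro (h | ⟨h1, h2⟩ | ⟨h1, h2⟩)
      · exact Or.inl (by omega)
      · exact Or.inr (Or.inl ⟨by omega, fun h => h2 ((hIshift a b).1 h)⟩)
      · exact Or.inr (Or.inr ⟨by omega, (hIshift b a).2 h2⟩)
  refine ⟨⟨R, hrefl, hantisymm, htrans, htotal, hinv⟩, ?_, ?_, fun a b => Iff.rfl⟩
  · rintro ⟨a, b, c, hab, hbc, hca, hab'⟩
    have hac : a < c := hab.trans hbc
    have hI : (a, c) ∈ I := by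
      rcases hca with h | ⟨h1, h2⟩ | ⟨h1, h2⟩
      · exact absurd h (ne_of_gt hac)
      · exact absurd h1 (not_lt.2 hac.le)
      · exact h2
    have hnI : (a, b) ∉ I := by
      rcases hab' with h | ⟨h1, h2⟩ | ⟨h1, h2⟩
      · exact absurd h (ne_of_lt hab)
      · exact h2
      · exact absurd h1 (not_lt.2 hab.le)
    obtain ⟨t, ht, hrab⟩ := hwit a b hab hnI
    exact h312' t ht a b c hab hbc (((hmem a c).1 hI).2 t ht) hrab
  · ext ⟨a, b⟩
    simp only [TITO.Inversions, Set.mem_setOf_eq]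
    constructor
    · rintro ⟨hab, h | ⟨h1, h2⟩ | ⟨h1, h2⟩⟩
      · exact absurd h (ne_of_gt hab)
      · exact absurd h1 (not_lt.2 hab.le)
      · exact h2
    · intro h
      exact ⟨((hmem a b).1 h).1, Or.inr (Or.inr ⟨((hmem a b).1 h).1, h⟩)⟩
end

section
/- Let S be a collection of 312-avoiding TITOs, and suppose z is a TITO that is a least upper bound of S in the Dyer order on all TITOs; that is, ⋃_{x ∈ S} Inv(x) ⊆ Inv(z), and for every TITO w with ⋃_{x ∈ S} Inv(x) ⊆ Inv(w) one has Inv(z) ⊆ Inv(w). Then z is 312-avoiding. -/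
namespace TITOAux

variable {n : ℕ}

/-- The union of inversion sets, as a relation. -/
def U (S : Set (TITO n)) (a b : ℤ) : Prop := ∃ t ∈ S, (a, b) ∈ t.Inversions

/-- The transitive closure of `U`. -/
def C (S : Set (TITO n)) : ℤ → ℤ → Prop := Relation.TransGen (U S)

lemma U_lt {S : Set (TITO n)} {a b : ℤ} (h : U S a b) : a < b := by
  obtain ⟨t, _, h, _⟩ := h; exact h

lemma C_lt {S : Set (TITO n)} {a b : ℤ} (h : C S a b) : a < b := by
  induction h with
  | single h => exact U_lt h
  | tail _ h ih => exact ih.trans (U_lt h)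

lemma U_left {S : Set (TITO n)} (h312 : ∀ t ∈ S, t.Avoids312)
    {a b c : ℤ} (hab : a < b) (hbc : b < c) (h : U S a c) : U S a b := by
  obtain ⟨t, ht, _, hrel⟩ := h
  refine ⟨t, ht, hab, ?_⟩
  rcases t.total b a with h' | h'
  · exact h'
  · exact absurd ⟨a, b, c, hab, hbc, hrel, h'⟩ (h312 t ht)

lemma C_left {S : Set (TITO n)} (h312 : ∀ t ∈ S, t.Avoids312)
    {a c : ℤ} (h : C S a c) : ∀ b, a < b → b < c → C S a b := by
  induction h with
  | single h => exact fun b h1 h2 => .single (U_left h312 h1 h2 h)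
  | @tail m c hm hmc ih =>
    intro b h1 h2
    rcases lt_trichotomy b m with h' | h' | h'
    · exact ih b h1 h'
    · exact h' ▸ hm
    · exact hm.tail (U_left h312 h' h2 hmc)

lemma U_shift {S : Set (TITO n)} {a b : ℤ} : U S a b ↔ U S (a + n) (b + n) := by
  constructor
  · rintro ⟨t, ht, hlt, hr⟩; exact ⟨t, ht, by omega, (t.invariant b a).1 hr⟩
  · rintro ⟨t, ht, hlt, hr⟩; exact ⟨t, ht, by omega, (t.invariant b a).2 hr⟩

lemma U_shift_neg {S : Set (TITO n)} {a b : ℤ} (h : U S a b) : U S (a - n) (b - n) := by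
  have := (U_shift (S := S) (a := a - n) (b := b - n)).2
  simp only [sub_add_cancel] at this
  exact this h

lemma C_shift_fwd {S : Set (TITO n)} {a b : ℤ} (h : C S a b) : C S (a + n) (b + n) := by
  induction h with
  | single h => exact .single (U_shift.1 h)
  | tail _ h ih => exact ih.tail (U_shift.1 h)

lemma C_shift_neg {S : Set (TITO n)} {a b : ℤ} (h : C S a b) : C S (a - n) (b - n) := by
  induction h with
  | single h => exact .single (U_shift_neg h)
  | tail _ h ih => exact ih.tail (U_shift_neg h)

lemma C_shift_bwd {S : Set (TITO n)} {a b : ℤ} (h : C S (a + n) (b + n)) : C S a b := by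
  have := C_shift_neg h
  simp only [add_sub_cancel_right] at this
  exact this

/-- The TITO defined by the transitive closure of the union of inversion sets. -/
def W (S : Set (TITO n)) (h312 : ∀ t ∈ S, t.Avoids312) : TITO n where
  rel a b := a = b ∨ (a < b ∧ ¬ C S a b) ∨ (b < a ∧ C S b a)
  refl a := Or.inl rfl
  antisymm a b hab hba := by
    rcases hab with h | ⟨h1, h2⟩ | ⟨h1, h2⟩
    · exact h
    · rcases hba with h' | ⟨h1', h2'⟩ | ⟨h1', h2'⟩
      · omega
      · omega
      · exact absurd h2' h2
    · rcases hba with h' | ⟨h1', h2'⟩ | ⟨h1', h2'⟩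
      · omega
      · exact absurd h2 h2'
      · omega
  trans a b c hab hbc := by
    rcases hab with rfl | ⟨h1, h2⟩ | ⟨h1, h2⟩
    · exact hbc
    · rcases hbc with rfl | ⟨h1', h2'⟩ | ⟨h1', h2'⟩
      · exact .inr (.inl ⟨h1, h2⟩)
      · exact .inr (.inl ⟨by omega, fun h => h2 (C_left h312 h b h1 h1')⟩)
      · rcases lt_trichotomy a c with h3 | rfl | h3
        · exact .inr (.inl ⟨h3, fun h => h2 (h.trans h2')⟩)
        · exact .inl rfl
        · exact .inr (.inr ⟨h3, C_left h312 h2' a h3 h1⟩)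
    · rcases hbc with rfl | ⟨h1', h2'⟩ | ⟨h1', h2'⟩
      · exact .inr (.inr ⟨h1, h2⟩)
      · rcases lt_trichotomy a c with h3 | rfl | h3
        · exact .inr (.inl ⟨h3, fun h => h2' (h2.trans h)⟩)
        · exact .inl rfl
        · exact absurd (C_left h312 h2 c h1' h3) h2'
      · exact .inr (.inr ⟨by omega, h2'.trans h2⟩)
  total a b := by
    rcases lt_trichotomy a b with h | rfl | h
    · by_cases hc : C S a b
      · exact .inr (.inr (.inr ⟨h, hc⟩))
      · exact .inl (.inr (.inl ⟨h, hc⟩))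
    · exact .inl (.inl rfl)
    · by_cases hc : C S b a
      · exact .inl (.inr (.inr ⟨h, hc⟩))
      · exact .inr (.inr (.inl ⟨h, hc⟩))
  invariant a b := by
    constructor
    · rintro (rfl | ⟨h1, h2⟩ | ⟨h1, h2⟩)
      · exact .inl rfl
      · exact .inr (.inl ⟨by omega, fun h => h2 (C_shift_bwd h)⟩)
      · exact .inr (.inr ⟨by omega, C_shift_fwd h2⟩)
    · rintro (h | ⟨h1, h2⟩ | ⟨h1, h2⟩)
      · exact .inl (by omega)
      · exact .inr (.inl ⟨by omega, fun h' => h2 (C_shift_fwd h')⟩)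
      · exact .inr (.inr ⟨by omega, C_shift_bwd h2⟩)

lemma mem_inv_W {S : Set (TITO n)} {h312 : ∀ t ∈ S, t.Avoids312} {a b : ℤ} :
    (a, b) ∈ (W S h312).Inversions ↔ C S a b := by
  constructor
  · rintro ⟨hlt, (h | ⟨h1, h2⟩ | ⟨h1, h2⟩)⟩
    · exact absurd h (by simp only []; omega)
    · exact absurd h1 (by omega)
    · exact h2
  · intro h
    exact ⟨C_lt h, Or.inr (Or.inr ⟨C_lt h, h⟩)⟩

lemma C_sub_inv {S : Set (TITO n)} {z : TITO n}
    (hub : (⋃ t ∈ S, TITO.Inversions t) ⊆ z.Inversions)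
    {a b : ℤ} (h : C S a b) : (a, b) ∈ z.Inversions := by
  induction h with
  | single h =>
    obtain ⟨t, ht, hm⟩ := h
    exact hub (Set.mem_biUnion ht hm)
  | @tail m b _ h ih =>
    obtain ⟨t, ht, hm⟩ := h
    have h' : (m, b) ∈ z.Inversions := hub (Set.mem_biUnion ht hm)
    exact ⟨ih.1.trans h'.1, z.trans b m a h'.2 ih.2⟩

end TITOAux

theorem stmt3 (n : ℕ) (hn : 2 ≤ n) (S : Set (TITO n)) (h312 : ∀ t ∈ S, t.Avoids312)
    (z : TITO n) (hub : (⋃ t ∈ S, TITO.Inversions t) ⊆ z.Inversions)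
    (hlub : ∀ w : TITO n, (⋃ t ∈ S, TITO.Inversions t) ⊆ w.Inversions →
      z.Inversions ⊆ w.Inversions) :
    z.Avoids312 := by
  rintro ⟨a, b, c, hab, hbc, hca, hba⟩
  have hU : (⋃ t ∈ S, TITO.Inversions t) ⊆ (TITOAux.W S h312).Inversions := by
    intro p hp
    simp only [Set.mem_iUnion] at hp
    obtain ⟨t, ht, hmem⟩ := hp
    exact TITOAux.mem_inv_W.2 (Relation.TransGen.single ⟨t, ht, hmem⟩)
  have hz := hlub _ hU
  have hac : (a, c) ∈ z.Inversions := ⟨hab.trans hbc, hca⟩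
  have hC : TITOAux.C S a c := TITOAux.mem_inv_W.1 (hz hac)
  have hCab : TITOAux.C S a b := TITOAux.C_left h312 hC b hab hbc
  have hinv : (a, b) ∈ z.Inversions := TITOAux.C_sub_inv hub hCab
  exact absurd (z.antisymm a b hba hinv.2) (by omega)
end

section
/- The poset of 312-avoiding TITOs, ordered by the Dyer order, is a lattice: for any two 312-avoiding TITOs x and y, there exists a 312-avoiding TITO that is a greatest lower bound of {x, y} within this poset, and there exists a 312-avoiding TITO that is a least upper bound of {x, y} within this poset. -/
namespace TamariAux

/-- Encoded profile of a 312-avoiding TITO: `f a ∈ {0,…,n}`, with `n` meaning `∞`. -/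
structure Valid (n : ℕ) (f : ℤ → ℤ) : Prop where
  nonneg : ∀ a, 0 ≤ f a
  le_n : ∀ a, f a ≤ n
  periodic : ∀ a, f (a + n) = f a
  cond : ∀ a i : ℤ, 1 ≤ i → i ≤ f a → f a ≠ n → f (a + i) + i ≤ f a

/-- `(a,b)` (with `a < b`) is an inversion of the order encoded by `f`. -/
def q (n : ℕ) (f : ℤ → ℤ) (a b : ℤ) : Prop := f a = n ∨ b ≤ a + f a

theorem q_closed {n : ℕ} {f : ℤ → ℤ} (hf : Valid n f) {a b c : ℤ} (hab : a < b) (hbc : b < c)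
    (h1 : q n f a b) (h2 : q n f b c) : q n f a c := by
  rcases h1 with h1 | h1
  · exact Or.inl h1
  by_cases hfa : f a = (n : ℤ)
  · exact Or.inl hfa
  have hcond := hf.cond a (b - a) (by omega) (by omega) hfa
  rw [show a + (b - a) = b by ring] at hcond
  have hfb : f b ≠ (n : ℤ) := by have := hf.le_n a; omega
  rcases h2 with h2 | h2
  · exact absurd h2 hfb
  · exact Or.inr (by omega)

theorem q_down {n : ℕ} {f : ℤ → ℤ} (hf : Valid n f) {a b c : ℤ} (hab : a < b) (hbc : b < c)
    (h : q n f a c) : q n f a b := by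
  rcases h with h | h
  · exact Or.inl h
  · exact Or.inr (by omega)

theorem q_shift {n : ℕ} {f : ℤ → ℤ} (hf : Valid n f) (a b : ℤ) :
    q n f (a + n) (b + n) ↔ q n f a b := by
  unfold q
  rw [hf.periodic a]
  constructor <;> (rintro (h | h); exacts [Or.inl h, Or.inr (by omega)])

/-- The TITO encoded by a valid profile `f`. -/
def mk (n : ℕ) (f : ℤ → ℤ) (hf : Valid n f) : TITO n where
  rel a b := a = b ∨ (a < b ∧ ¬ q n f a b) ∨ (b < a ∧ q n f b a)
  refl a := Or.inl rfl
  antisymm a b h1 h2 := by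
    rcases h1 with h | ⟨h, hq⟩ | ⟨h, hq⟩ <;>
      rcases h2 with h' | ⟨h', hq'⟩ | ⟨h', hq'⟩ <;> first | omega | exact absurd hq' hq | exact absurd hq hq'
  trans a b c h1 h2 := by
    rcases h1 with h | ⟨h, hq⟩ | ⟨h, hq⟩
    · subst h; exact h2
    all_goals rcases h2 with h' | ⟨h', hq'⟩ | ⟨h', hq'⟩
    · subst h'; exact Or.inr (Or.inl ⟨h, hq⟩)
    · -- a < b, b < c, ¬q a b, ¬q b c
      refine Or.inr (Or.inl ⟨by omega, fun hac => hq (q_down hf h h' hac)⟩)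
    · -- a < b, c < b, ¬q a b, q c b
      rcases lt_trichotomy a c with hac | hac | hac
      · exact Or.inr (Or.inl ⟨hac, fun h3 => hq (q_closed hf hac h' h3 hq')⟩)
      · exact Or.inl hac
      · exact Or.inr (Or.inr ⟨hac, q_down hf hac h hq'⟩)
    · subst h'; exact Or.inr (Or.inr ⟨h, hq⟩)
    · -- b < a, b < c, q b a, ¬q b c
      rcases lt_trichotomy a c with hac | hac | hac
      · exact Or.inr (Or.inl ⟨hac, fun h3 => hq' (q_closed hf h hac hq h3)⟩)
      · exact Or.inl hac
      · exact absurd (q_down hf h' hac hq) hq'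
    · -- b < a, c < b, q b a, q c b
      exact Or.inr (Or.inr ⟨by omega, q_closed hf h' h hq' hq⟩)
  total a b := by
    rcases lt_trichotomy a b with h | h | h
    · by_cases hq : q n f a b
      · exact Or.inr (Or.inr (Or.inr ⟨h, hq⟩))
      · exact Or.inl (Or.inr (Or.inl ⟨h, hq⟩))
    · exact Or.inl (Or.inl h)
    · by_cases hq : q n f b a
      · exact Or.inl (Or.inr (Or.inr ⟨h, hq⟩))
      · exact Or.inr (Or.inr (Or.inl ⟨h, hq⟩))
  invariant a b := by
    rw [q_shift hf a b, q_shift hf b a]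
    constructor <;> (rintro (h | ⟨h, hq⟩ | ⟨h, hq⟩))
    exacts [Or.inl (by omega), Or.inr (Or.inl ⟨by omega, hq⟩), Or.inr (Or.inr ⟨by omega, hq⟩),
      Or.inl (by omega), Or.inr (Or.inl ⟨by omega, hq⟩), Or.inr (Or.inr ⟨by omega, hq⟩)]

theorem rel_mk_iff {n : ℕ} {f : ℤ → ℤ} (hf : Valid n f) {a b : ℤ} (hab : a < b) :
    (mk n f hf).rel b a ↔ q n f a b := by
  show b = a ∨ (b < a ∧ ¬ q n f b a) ∨ (a < b ∧ q n f a b) ↔ _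
  constructor
  · rintro (h | ⟨h, _⟩ | ⟨_, h⟩) <;> first | omega | exact h
  · intro h; exact Or.inr (Or.inr ⟨hab, h⟩)

theorem inv_mk {n : ℕ} {f : ℤ → ℤ} (hf : Valid n f) :
    (mk n f hf).Inversions = {p : ℤ × ℤ | p.1 < p.2 ∧ q n f p.1 p.2} := by
  ext ⟨a, b⟩
  simp only [TITO.Inversions, Set.mem_setOf_eq]
  constructor
  · rintro ⟨h, hr⟩; exact ⟨h, (rel_mk_iff hf h).1 hr⟩
  · rintro ⟨h, hq⟩; exact ⟨h, (rel_mk_iff hf h).2 hq⟩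

theorem avoids_mk {n : ℕ} {f : ℤ → ℤ} (hf : Valid n f) : (mk n f hf).Avoids312 := by
  rintro ⟨a, b, c, hab, hbc, hca, hab'⟩
  have h1 : q n f a c := (rel_mk_iff hf (hab.trans hbc)).1 hca
  have h2 : q n f a b := q_down hf hab hbc h1
  rcases hab' with h | ⟨h, hq⟩ | ⟨h, hq⟩
  · omega
  · exact hq h2
  · omega




variable {n : ℕ}

/-- If `c ≼ a` with `a < b ≤ c`, then `b ≼ a` (for 312-avoiding orders). -/
theorem down {t : TITO n} (ht : t.Avoids312) {a b c : ℤ} (h1 : a < b) (h2 : b ≤ c)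
    (h3 : t.rel c a) : t.rel b a := by
  rcases eq_or_lt_of_le h2 with h | h
  · subst h; exact h3
  · rcases t.total b a with hr | hr
    · exact hr
    · exact absurd ⟨a, b, c, h1, h, h3, hr⟩ ht

open Classical in
/-- The set of `i ∈ [1, n]` with `a + i ≼ a`. -/
noncomputable def F (t : TITO n) (a : ℤ) : Finset ℕ :=
  (Finset.Icc 1 n).filter (fun i => t.rel (a + (i : ℤ)) a)

theorem mem_F {t : TITO n} {a : ℤ} {i : ℕ} :
    i ∈ F t a ↔ 1 ≤ i ∧ i ≤ n ∧ t.rel (a + (i : ℤ)) a := by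
  simp [F, Finset.mem_filter, Finset.mem_Icc, and_assoc]

theorem F_eq_Icc {t : TITO n} (ht : t.Avoids312) (a : ℤ) :
    F t a = Finset.Icc 1 (F t a).card := by
  have hsub : F t a ⊆ Finset.Icc 1 (F t a).card := by
    intro j hj
    have hj' := mem_F.1 hj
    have hIcc : Finset.Icc 1 j ⊆ F t a := by
      intro i hi
      rw [Finset.mem_Icc] at hi
      refine mem_F.2 ⟨hi.1, le_trans hi.2 hj'.2.1, ?_⟩
      exact down ht (show a < a + (i : ℤ) by push_cast; omega)
        (show a + (i : ℤ) ≤ a + (j : ℤ) by push_cast; omega) hj'.2.2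
    have hcard : j ≤ (F t a).card := by
      have := Finset.card_le_card hIcc
      simpa using this
    exact Finset.mem_Icc.2 ⟨hj'.1, hcard⟩
  exact Finset.eq_of_subset_of_card_le hsub (by simp)

theorem card_F_le {t : TITO n} (a : ℤ) : (F t a).card ≤ n := by
  have : F t a ⊆ Finset.Icc 1 n := fun i hi =>
    Finset.mem_Icc.2 ⟨(mem_F.1 hi).1, (mem_F.1 hi).2.1⟩
  have := Finset.card_le_card this
  simpa using this

theorem mem_F_iff_le_card {t : TITO n} (ht : t.Avoids312) {a : ℤ} {i : ℕ} (hi : 1 ≤ i) :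
    i ∈ F t a ↔ i ≤ (F t a).card := by
  conv_lhs => rw [F_eq_Icc ht a]
  simp [Finset.mem_Icc, hi]

/-- The encoded profile of a TITO. -/
noncomputable def fT (t : TITO n) (a : ℤ) : ℤ := ((F t a).card : ℤ)

theorem rel_iterate {t : TITO n} {a : ℤ} (h : t.rel (a + n) a) :
    ∀ k : ℕ, t.rel (a + (k + 1) * n) a := by
  intro k
  induction k with
  | zero => simpa using h
  | succ k ih =>
    have h2 : t.rel (a + (k + 1) * n + n) (a + n) := (t.invariant _ _).1 ih
    have h3 : t.rel (a + ((k : ℤ) + 1 + 1) * n) (a + n) := by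
      rw [show a + ((k : ℤ) + 1 + 1) * n = a + ((k : ℤ) + 1) * n + n by ring]
      exact_mod_cast h2
    have := t.trans _ _ _ h3 h
    push_cast
    exact_mod_cast this

theorem rel_of_full {t : TITO n} (ht : t.Avoids312) (hn : 0 < n) {a : ℤ}
    (h : t.rel (a + n) a) {b : ℤ} (hb : a < b) : t.rel b a := by
  set k : ℕ := (b - a).toNat with hk
  have hk1 : 1 ≤ k := by omega
  have h2 : t.rel (a + k * n) a := by
    have h3 := rel_iterate h (k - 1)
    rwa [show ((k - 1 : ℕ) : ℤ) + 1 = (k : ℤ) by omega] at h3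
  have hbk : b ≤ a + (k : ℤ) * n := by
    have : (k : ℤ) ≤ (k : ℤ) * n :=
      le_mul_of_one_le_right (by positivity) (by exact_mod_cast hn)
    omega
  exact down ht hb hbk h2




variable {n : ℕ}

theorem fT_nonneg (t : TITO n) (a : ℤ) : 0 ≤ fT t a := Int.ofNat_nonneg _

theorem fT_le_n (t : TITO n) (a : ℤ) : fT t a ≤ n := by
  have := card_F_le (t := t) a; unfold fT; exact_mod_cast this

theorem fT_eq_n_iff {t : TITO n} (ht : t.Avoids312) (hn : 0 < n) {a : ℤ} :
    fT t a = n ↔ t.rel (a + n) a := by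
  constructor
  · intro h
    have hn' : (n : ℕ) ∈ F t a := (mem_F_iff_le_card ht hn).2 (by unfold fT at h; omega)
    exact (mem_F.1 hn').2.2
  · intro h
    have : (n : ℕ) ∈ F t a := mem_F.2 ⟨hn, le_refl _, h⟩
    have := (mem_F_iff_le_card ht hn).1 this
    have := card_F_le (t := t) a
    unfold fT; omega

theorem rel_iff_q {t : TITO n} (ht : t.Avoids312) (hn : 0 < n) {a b : ℤ} (hab : a < b) :
    t.rel b a ↔ q n (fT t) a b := by
  constructor
  · intro h
    by_cases hfa : fT t a = n
    · exact Or.inl hfa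
    · refine Or.inr ?_
      have hbn : b < a + n := by
        by_contra hc
        have : t.rel (a + n) a := down ht (by omega) (by omega) h
        exact hfa ((fT_eq_n_iff ht hn).2 this)
      set i : ℕ := (b - a).toNat with hi
      have hmem : i ∈ F t a := mem_F.2 ⟨by omega, by omega,
        by rw [show a + (i : ℤ) = b by omega]; exact h⟩
      have := (mem_F_iff_le_card ht (by omega)).1 hmem
      unfold fT; omega
  · rintro (h | h)
    · exact rel_of_full ht hn ((fT_eq_n_iff ht hn).1 h) hab
    · set i : ℕ := (b - a).toNat with hi
      have hcard : i ≤ (F t a).card := by unfold fT at h; omega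
      have hmem : i ∈ F t a := (mem_F_iff_le_card ht (by omega)).2 hcard
      have := (mem_F.1 hmem).2.2
      rwa [show a + (i : ℤ) = b by omega] at this

theorem valid_fT {t : TITO n} (ht : t.Avoids312) (hn : 0 < n) : Valid n (fT t) where
  nonneg := fT_nonneg t
  le_n := fT_le_n t
  periodic a := by
    have : F t (a + n) = F t a := by
      ext i
      simp only [mem_F]
      constructor
      · rintro ⟨h1, h2, h3⟩
        refine ⟨h1, h2, ?_⟩
        have := (t.invariant (a + i) a).2 (by rwa [show a + (i:ℤ) + n = a + n + (i:ℤ) by ring])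
        exact this
      · rintro ⟨h1, h2, h3⟩
        refine ⟨h1, h2, ?_⟩
        have := (t.invariant (a + i) a).1 h3
        rwa [show a + (i:ℤ) + n = a + n + (i:ℤ) by ring] at this
    unfold fT; rw [this]
  cond a i h1 h2 h3 := by
    set b := a + i with hb
    have hab : a < b := by omega
    have hrel : t.rel b a := (rel_iff_q ht hn hab).2 (Or.inr (by omega))
    have hfb : fT t b ≠ n := by
      intro hc
      have hrel2 : t.rel (b + n) b := (fT_eq_n_iff ht hn).1 hc
      have hrel3 : t.rel (b + n) a := t.trans _ _ _ hrel2 hrel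
      have := (rel_iff_q ht hn (show a < b + n by omega)).1 hrel3
      have hle := fT_le_n t a
      rcases this with h | h <;> omega
    rcases eq_or_lt_of_le (fT_nonneg t b) with h0 | h0
    · omega
    · set c := b + fT t b with hc
      have hbc : b < c := by omega
      have hrelc : t.rel c b := (rel_iff_q ht hn hbc).2 (Or.inr (by omega))
      have hrela : t.rel c a := t.trans _ _ _ hrelc hrel
      have := (rel_iff_q ht hn (show a < c by omega)).1 hrela
      rcases this with h | h <;> omega

theorem inv_eq_qset {t : TITO n} (ht : t.Avoids312) (hn : 0 < n) :
    t.Inversions = {p : ℤ × ℤ | p.1 < p.2 ∧ q n (fT t) p.1 p.2} := by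
  ext ⟨a, b⟩
  simp only [TITO.Inversions, Set.mem_setOf_eq]
  constructor
  · rintro ⟨h, hr⟩; exact ⟨h, (rel_iff_q ht hn h).1 hr⟩
  · rintro ⟨h, hq⟩; exact ⟨h, (rel_iff_q ht hn h).2 hq⟩

theorem qset_mono {f g : ℤ → ℤ} (hg : Valid n g) (hfg : ∀ a, f a ≤ g a) :
    {p : ℤ × ℤ | p.1 < p.2 ∧ q n f p.1 p.2} ⊆ {p : ℤ × ℤ | p.1 < p.2 ∧ q n g p.1 p.2} := by
  rintro ⟨a, b⟩ hm
  obtain ⟨hab, hq⟩ : a < b ∧ q n f a b := hm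
  refine show a < b ∧ q n g a b from ⟨hab, ?_⟩
  rcases hq with h | h
  · have := hfg a; have := hg.le_n a
    exact Or.inl (by omega)
  · exact Or.inr (by have := hfg a; omega)

theorem le_of_qset_subset {f g : ℤ → ℤ} (hf : Valid n f) (hg : Valid n g)
    (h : {p : ℤ × ℤ | p.1 < p.2 ∧ q n f p.1 p.2} ⊆ {p : ℤ × ℤ | p.1 < p.2 ∧ q n g p.1 p.2})
    (a : ℤ) : f a ≤ g a := by
  by_cases hfa : f a = n
  · have hmem : ((a, a + n + 1) : ℤ × ℤ) ∈ {p : ℤ × ℤ | p.1 < p.2 ∧ q n f p.1 p.2} :=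
      ⟨by omega, Or.inl hfa⟩
    obtain ⟨-, h2⟩ : a < a + n + 1 ∧ q n g a (a + n + 1) := h hmem
    rcases h2 with h2 | h2
    · omega
    · have := hg.le_n a; omega
  · rcases eq_or_lt_of_le (hf.nonneg a) with h0 | h0
    · have := hg.nonneg a; omega
    · have hmem : ((a, a + f a) : ℤ × ℤ) ∈ {p : ℤ × ℤ | p.1 < p.2 ∧ q n f p.1 p.2} :=
        show a < a + f a ∧ q n f a (a + f a) from ⟨by omega, Or.inr (by omega)⟩
      obtain ⟨-, h2⟩ : a < a + f a ∧ q n g a (a + f a) := h hmem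
      have := hf.le_n a
      rcases h2 with h2 | h2 <;> omega




variable {n : ℕ}

theorem valid_min {f g : ℤ → ℤ} (hf : Valid n f) (hg : Valid n g) :
    Valid n (fun a => min (f a) (g a)) where
  nonneg a := le_min (hf.nonneg a) (hg.nonneg a)
  le_n a := min_le_of_left_le (hf.le_n a)
  periodic a := by
    show min (f (a + n)) (g (a + n)) = min (f a) (g a)
    rw [hf.periodic, hg.periodic]
  cond a i h1 h2 h3 := by
    have h2' : i ≤ min (f a) (g a) := h2
    have h3' : min (f a) (g a) ≠ (n : ℤ) := h3
    show min (f (a + i)) (g (a + i)) + i ≤ min (f a) (g a)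
    clear h2 h3
    by_cases hfa : f a = n
    · by_cases hga : g a = n
      · omega
      · have := hg.cond a i h1 (by omega) hga
        omega
    · have hcf := hf.cond a i h1 (by omega) hfa
      by_cases hga : g a = n
      · omega
      · have := hg.cond a i h1 (by omega) hga
        omega

theorem valid_const_n : Valid n (fun _ => (n : ℤ)) where
  nonneg _ := Int.ofNat_nonneg n
  le_n _ := le_refl _
  periodic _ := rfl
  cond _ _ _ _ h3 := absurd rfl h3

/-- The candidate upper bounds. -/
def UB (n : ℕ) (f g u : ℤ → ℤ) : Prop :=
  Valid n u ∧ (∀ b, f b ≤ u b) ∧ (∀ b, g b ≤ u b)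

/-- The pointwise infimum of all valid common upper bounds. -/
noncomputable def jf (n : ℕ) (f g : ℤ → ℤ) (a : ℤ) : ℤ :=
  sInf {v : ℤ | ∃ u : ℤ → ℤ, UB n f g u ∧ v = u a}

section join

variable {f g : ℤ → ℤ}

theorem UB_const_n (hf : Valid n f) (hg : Valid n g) : UB n f g (fun _ => (n : ℤ)) :=
  ⟨valid_const_n, fun b => hf.le_n b, fun b => hg.le_n b⟩

theorem jf_set_nonempty (hf : Valid n f) (hg : Valid n g) (a : ℤ) : {v : ℤ | ∃ u : ℤ → ℤ, UB n f g u ∧ v = u a}.Nonempty :=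
  ⟨(n : ℤ), fun _ => (n : ℤ), UB_const_n hf hg, rfl⟩

theorem jf_set_bdd (a : ℤ) : BddBelow {v : ℤ | ∃ u : ℤ → ℤ, UB n f g u ∧ v = u a} := by
  refine ⟨0, ?_⟩
  rintro v ⟨u, hu, rfl⟩
  exact hu.1.nonneg a

theorem jf_mem (hf : Valid n f) (hg : Valid n g) (a : ℤ) : ∃ u : ℤ → ℤ, UB n f g u ∧ jf n f g a = u a :=
  Int.csInf_mem (jf_set_nonempty hf hg a) (jf_set_bdd a)

theorem jf_le {u : ℤ → ℤ} (hu : UB n f g u) (a : ℤ) : jf n f g a ≤ u a :=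
  csInf_le (jf_set_bdd a) ⟨u, hu, rfl⟩

theorem le_jf (hf : Valid n f) (hg : Valid n g) {c : ℤ} {a : ℤ} (h : ∀ u : ℤ → ℤ, UB n f g u → c ≤ u a) : c ≤ jf n f g a :=
  le_csInf (jf_set_nonempty hf hg a) (by rintro v ⟨u, hu, rfl⟩; exact h u hu)

theorem valid_jf (hf : Valid n f) (hg : Valid n g) : Valid n (jf n f g) where
  nonneg a := le_jf hf hg (fun u hu => hu.1.nonneg a)
  le_n a := jf_le (UB_const_n hf hg) a
  periodic a := by
    unfold jf
    congr 1
    ext v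
    constructor
    · rintro ⟨u, hu, rfl⟩; exact ⟨u, hu, hu.1.periodic a⟩
    · rintro ⟨u, hu, rfl⟩; exact ⟨u, hu, (hu.1.periodic a).symm⟩
  cond a i h1 h2 h3 := by
    obtain ⟨u₀, hu₀, he⟩ := jf_mem hf hg a
    have hc := hu₀.1.cond a i h1 (by omega) (by omega)
    have := jf_le hu₀ (a + i)
    omega

theorem f_le_jf (hf : Valid n f) (hg : Valid n g) (a : ℤ) : f a ≤ jf n f g a :=
  le_jf hf hg (fun u hu => hu.2.1 a)

theorem g_le_jf (hf : Valid n f) (hg : Valid n g) (a : ℤ) : g a ≤ jf n f g a :=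
  le_jf hf hg (fun u hu => hu.2.2 a)

end join

end TamariAux

theorem stmt4 (n : ℕ) (hn : 2 ≤ n) (x y : TITO n) (hx : x.Avoids312) (hy : y.Avoids312) :
    (∃ m : TITO n, m.Avoids312 ∧ m.Inversions ⊆ x.Inversions ∧ m.Inversions ⊆ y.Inversions ∧
      ∀ w : TITO n, w.Avoids312 → w.Inversions ⊆ x.Inversions → w.Inversions ⊆ y.Inversions →
        w.Inversions ⊆ m.Inversions) ∧
    (∃ j : TITO n, j.Avoids312 ∧ x.Inversions ⊆ j.Inversions ∧ y.Inversions ⊆ j.Inversions ∧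
      ∀ w : TITO n, w.Avoids312 → x.Inversions ⊆ w.Inversions → y.Inversions ⊆ w.Inversions →
        j.Inversions ⊆ w.Inversions) := by
  have hn' : 0 < n := by omega
  classical
  open TamariAux in
  refine ⟨?_, ?_⟩
  · -- meet
    have hvx := TamariAux.valid_fT hx hn'
    have hvy := TamariAux.valid_fT hy hn'
    have hvm := TamariAux.valid_min hvx hvy
    refine ⟨TamariAux.mk n _ hvm, TamariAux.avoids_mk hvm, ?_, ?_, ?_⟩
    · rw [TamariAux.inv_mk hvm, TamariAux.inv_eq_qset hx hn']
      exact TamariAux.qset_mono hvx (fun a => min_le_left _ _)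
    · rw [TamariAux.inv_mk hvm, TamariAux.inv_eq_qset hy hn']
      exact TamariAux.qset_mono hvy (fun a => min_le_right _ _)
    · intro w hw h1 h2
      have hvw := TamariAux.valid_fT hw hn'
      rw [TamariAux.inv_eq_qset hw hn', TamariAux.inv_mk hvm]
      refine TamariAux.qset_mono hvm (fun a => le_min ?_ ?_)
      · refine TamariAux.le_of_qset_subset hvw hvx ?_ a
        rw [← TamariAux.inv_eq_qset hw hn', ← TamariAux.inv_eq_qset hx hn']
        exact h1
      · refine TamariAux.le_of_qset_subset hvw hvy ?_ a
        rw [← TamariAux.inv_eq_qset hw hn', ← TamariAux.inv_eq_qset hy hn']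
        exact h2
  · -- join
    have hvx := TamariAux.valid_fT hx hn'
    have hvy := TamariAux.valid_fT hy hn'
    have hvj := TamariAux.valid_jf hvx hvy
    refine ⟨TamariAux.mk n _ hvj, TamariAux.avoids_mk hvj, ?_, ?_, ?_⟩
    · rw [TamariAux.inv_mk hvj, TamariAux.inv_eq_qset hx hn']
      exact TamariAux.qset_mono hvj (TamariAux.f_le_jf hvx hvy)
    · rw [TamariAux.inv_mk hvj, TamariAux.inv_eq_qset hy hn']
      exact TamariAux.qset_mono hvj (TamariAux.g_le_jf hvx hvy)
    · intro w hw h1 h2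
      have hvw := TamariAux.valid_fT hw hn'
      rw [TamariAux.inv_eq_qset hw hn', TamariAux.inv_mk hvj]
      refine TamariAux.qset_mono hvw (TamariAux.jf_le ⟨hvw, ?_, ?_⟩)
      · refine fun a => TamariAux.le_of_qset_subset hvx hvw ?_ a
        rw [← TamariAux.inv_eq_qset hw hn', ← TamariAux.inv_eq_qset hx hn']
        exact h1
      · refine fun a => TamariAux.le_of_qset_subset hvy hvw ?_ a
        rw [← TamariAux.inv_eq_qset hw hn', ← TamariAux.inv_eq_qset hy hn']
        exact h2
end

section
/- For every TITO ≼: (i) the set of 312-avoiding TITOs μ with Inv(μ) ⊆ Inv(≼) has a greatest element with respect to the Dyer order (i.e., there is a 312-avoiding TITO μ₀ with Inv(μ₀) ⊆ Inv(≼) such that Inv(μ) ⊆ Inv(μ₀) for every 312-avoiding TITO μ with Inv(μ) ⊆ Inv(≼)); and (ii) the set of 132-avoiding TITOs μ with Inv(≼) ⊆ Inv(μ) has a least element with respect to the Dyer order. -/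
namespace Stmt5Aux

variable {n : ℕ}

/-- `S t a c`: every element of `(a, c]` is `t`-below `a`. -/
def S (t : TITO n) (a c : ℤ) : Prop := a < c ∧ ∀ b : ℤ, a < b → b ≤ c → t.rel b a

lemma S_down {t : TITO n} {a b c : ℤ} (h : S t a c) (hab : a < b) (hbc : b ≤ c) : S t a b :=
  ⟨hab, fun d hd hdb => h.2 d hd (hdb.trans hbc)⟩

lemma S_trans {t : TITO n} {a b c : ℤ} (h1 : S t a b) (h2 : S t b c) : S t a c := by
  refine ⟨h1.1.trans h2.1, fun d hd hdc => ?_⟩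
  by_cases hdb : d ≤ b
  · exact h1.2 d hd hdb
  · exact t.trans d b a (h2.2 d (lt_of_not_ge hdb) hdc) (h1.2 b h1.1 le_rfl)

lemma S_shift {t : TITO n} {a c : ℤ} : S t a c ↔ S t (a + n) (c + n) := by
  constructor
  · rintro ⟨h, hf⟩
    refine ⟨by omega, fun b hb1 hb2 => ?_⟩
    have := hf (b - n) (by omega) (by omega)
    have := (t.invariant (b - n) a).1 this
    simpa using this
  · rintro ⟨h, hf⟩
    refine ⟨by omega, fun b hb1 hb2 => ?_⟩
    have := hf (b + n) (by omega) (by omega)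
    exact (t.invariant b a).2 this

def mu0 (t : TITO n) : TITO n where
  rel x y := x = y ∨ (x < y ∧ ¬ S t x y) ∨ (y < x ∧ S t y x)
  refl a := Or.inl rfl
  antisymm a b h1 h2 := by
    rcases h1 with h | ⟨h, hs⟩ | ⟨h, hs⟩
    · exact h
    all_goals rcases h2 with h' | ⟨h', hs'⟩ | ⟨h', hs'⟩ <;>
      first | omega | exact absurd hs' hs | exact absurd hs hs'
  total a b := by
    rcases lt_trichotomy a b with h | rfl | h
    · by_cases hs : S t a b
      · exact Or.inr (Or.inr (Or.inr ⟨h, hs⟩))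
      · exact Or.inl (Or.inr (Or.inl ⟨h, hs⟩))
    · exact Or.inl (Or.inl rfl)
    · by_cases hs : S t b a
      · exact Or.inl (Or.inr (Or.inr ⟨h, hs⟩))
      · exact Or.inr (Or.inr (Or.inl ⟨h, hs⟩))
  trans x y z hxy hyz := by
    rcases hxy with rfl | ⟨h1, hs1⟩ | ⟨h1, hs1⟩
    · exact hyz
    · rcases hyz with rfl | ⟨h2, hs2⟩ | ⟨h2, hs2⟩
      · exact Or.inr (Or.inl ⟨h1, hs1⟩)
      · exact Or.inr (Or.inl ⟨h1.trans h2, fun hS => hs1 (S_down hS h1 h2.le)⟩)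
      · rcases lt_trichotomy x z with h | rfl | h
        · exact Or.inr (Or.inl ⟨h, fun hS => hs1 (S_trans hS hs2)⟩)
        · exact Or.inl rfl
        · exact Or.inr (Or.inr ⟨h, S_down hs2 h h1.le⟩)
    · rcases hyz with rfl | ⟨h2, hs2⟩ | ⟨h2, hs2⟩
      · exact Or.inr (Or.inr ⟨h1, hs1⟩)
      · rcases lt_trichotomy x z with h | rfl | h
        · exact Or.inr (Or.inl ⟨h, fun hS => hs2 (S_trans hs1 hS)⟩)
        · exact Or.inl rfl
        · exact absurd (S_down hs1 h2 h.le) hs2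
      · exact Or.inr (Or.inr ⟨h2.trans h1, S_trans hs2 hs1⟩)
  invariant a b := by
    constructor
    · rintro (rfl | ⟨h, hs⟩ | ⟨h, hs⟩)
      · exact Or.inl rfl
      · exact Or.inr (Or.inl ⟨by omega, fun hS => hs (S_shift.2 hS)⟩)
      · exact Or.inr (Or.inr ⟨by omega, S_shift.1 hs⟩)
    · rintro (h | ⟨h, hs⟩ | ⟨h, hs⟩)
      · exact Or.inl (by omega)
      · exact Or.inr (Or.inl ⟨by omega, fun hS => hs (S_shift.1 hS)⟩)
      · exact Or.inr (Or.inr ⟨by omega, S_shift.2 hs⟩)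

/-- `T t a c`: some element of `[a, c)` is `t`-above `c`. -/
def T (t : TITO n) (a c : ℤ) : Prop := a < c ∧ ∃ b : ℤ, a ≤ b ∧ b < c ∧ t.rel c b

lemma T_mono {t : TITO n} {a b c : ℤ} (h : T t b c) (hab : a < b) : T t a c := by
  obtain ⟨h1, d, hd1, hd2, hd3⟩ := h
  exact ⟨hab.trans h1, d, le_trans hab.le hd1, hd2, hd3⟩

lemma T_shift {t : TITO n} {a c : ℤ} : T t a c ↔ T t (a + n) (c + n) := by
  constructor
  · rintro ⟨h, b, hb1, hb2, hb3⟩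
    exact ⟨by omega, b + n, by omega, by omega, (t.invariant c b).1 hb3⟩
  · rintro ⟨h, b, hb1, hb2, hb3⟩
    refine ⟨by omega, b - n, by omega, by omega, ?_⟩
    have := (t.invariant c (b - n)).2 (by simpa using hb3)
    exact this

def nu0 (t : TITO n) : TITO n where
  rel x y := x = y ∨ (x < y ∧ ¬ T t x y) ∨ (y < x ∧ T t y x)
  refl a := Or.inl rfl
  antisymm a b h1 h2 := by
    rcases h1 with h | ⟨h, hs⟩ | ⟨h, hs⟩
    · exact h
    all_goals rcases h2 with h' | ⟨h', hs'⟩ | ⟨h', hs'⟩ <;>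
      first | omega | exact absurd hs' hs | exact absurd hs hs'
  total a b := by
    rcases lt_trichotomy a b with h | rfl | h
    · by_cases hs : T t a b
      · exact Or.inr (Or.inr (Or.inr ⟨h, hs⟩))
      · exact Or.inl (Or.inr (Or.inl ⟨h, hs⟩))
    · exact Or.inl (Or.inl rfl)
    · by_cases hs : T t b a
      · exact Or.inl (Or.inr (Or.inr ⟨h, hs⟩))
      · exact Or.inr (Or.inr (Or.inl ⟨h, hs⟩))
  trans x y z hxy hyz := by
    rcases hxy with rfl | ⟨h1, hs1⟩ | ⟨h1, hs1⟩
    · exact hyz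
    · rcases hyz with rfl | ⟨h2, hs2⟩ | ⟨h2, hs2⟩
      · exact Or.inr (Or.inl ⟨h1, hs1⟩)
      · -- x<y, ¬T x y; y<z, ¬T y z ⊢ ¬T x z
        refine Or.inr (Or.inl ⟨h1.trans h2, ?_⟩)
        rintro ⟨-, b, hb1, hb2, hb3⟩
        by_cases hby : y ≤ b
        · exact hs2 ⟨h2, b, hby, hb2, hb3⟩
        · rcases t.total y b with hr | hr
          · exact hs1 ⟨h1, b, hb1, lt_of_not_ge hby, hr⟩
          · exact hs2 ⟨h2, y, le_rfl, h2, t.trans z b y hb3 hr⟩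
      · -- x<y, ¬T x y; z<y, T z y
        rcases lt_trichotomy x z with h | rfl | h
        · exact absurd (T_mono hs2 h) hs1
        · exact Or.inl rfl
        · -- z<x<y ⊢ T z x
          refine Or.inr (Or.inr ⟨h, h, ?_⟩)
          obtain ⟨-, b, hb1, hb2, hb3⟩ := hs2
          by_cases hbx : x ≤ b
          · exact absurd ⟨h1, b, hbx, hb2, hb3⟩ hs1
          · rcases t.total x b with hr | hr
            · exact ⟨b, hb1, lt_of_not_ge hbx, hr⟩
            · exact absurd ⟨h1, x, le_rfl, h1, t.trans y b x hb3 hr⟩ hs1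
    · rcases hyz with rfl | ⟨h2, hs2⟩ | ⟨h2, hs2⟩
      · exact Or.inr (Or.inr ⟨h1, hs1⟩)
      · -- y<x, T y x; y<z, ¬T y z
        rcases lt_trichotomy x z with h | rfl | h
        · refine Or.inr (Or.inl ⟨h, ?_⟩)
          rintro ⟨-, b, hb1, hb2, hb3⟩
          exact hs2 ⟨h2, b, le_trans h1.le hb1, hb2, hb3⟩
        · exact Or.inl rfl
        · -- z<x, y<z ⊢ T z x
          refine Or.inr (Or.inr ⟨h, h, ?_⟩)
          obtain ⟨-, b, hb1, hb2, hb3⟩ := hs1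
          by_cases hbz : z ≤ b
          · exact ⟨b, hbz, hb2, hb3⟩
          · rcases t.total z b with hr | hr
            · exact absurd ⟨h2, b, hb1, lt_of_not_ge hbz, hr⟩ hs2
            · exact ⟨z, le_rfl, h, t.trans x b z hb3 hr⟩
      · -- z<y<x
        exact Or.inr (Or.inr ⟨h2.trans h1, T_mono hs1 h2⟩)
  invariant a b := by
    constructor
    · rintro (rfl | ⟨h, hs⟩ | ⟨h, hs⟩)
      · exact Or.inl rfl
      · exact Or.inr (Or.inl ⟨by omega, fun hS => hs (T_shift.2 hS)⟩)
      · exact Or.inr (Or.inr ⟨by omega, T_shift.1 hs⟩)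
    · rintro (h | ⟨h, hs⟩ | ⟨h, hs⟩)
      · exact Or.inl (by omega)
      · exact Or.inr (Or.inl ⟨by omega, fun hS => hs (T_shift.1 hS)⟩)
      · exact Or.inr (Or.inr ⟨by omega, T_shift.2 hs⟩)

end Stmt5Aux

theorem stmt5 (n : ℕ) (hn : 2 ≤ n) (t : TITO n) :
    (∃ μ₀ : TITO n, μ₀.Avoids312 ∧ μ₀.Inversions ⊆ t.Inversions ∧
      ∀ μ : TITO n, μ.Avoids312 → μ.Inversions ⊆ t.Inversions →
        μ.Inversions ⊆ μ₀.Inversions) ∧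
    (∃ ν₀ : TITO n, ν₀.Avoids132 ∧ t.Inversions ⊆ ν₀.Inversions ∧
      ∀ ν : TITO n, ν.Avoids132 → t.Inversions ⊆ ν.Inversions →
        ν₀.Inversions ⊆ ν.Inversions) := by
  constructor
  · refine ⟨Stmt5Aux.mu0 t, ?_, ?_, ?_⟩
    · rintro ⟨a, b, c, hab, hbc, hca, hab'⟩
      rcases hca with h | ⟨h, -⟩ | ⟨-, hS⟩
      · omega
      · omega
      · rcases hab' with h' | ⟨-, hs'⟩ | ⟨h', -⟩
        · omega
        · exact hs' (Stmt5Aux.S_down hS hab hbc.le)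
        · omega
    · rintro ⟨a, c⟩ ⟨hac, hrel⟩
      rcases hrel with h | ⟨h, -⟩ | ⟨-, hS⟩
      · exact absurd h (by omega)
      · omega
      · exact ⟨hac, hS.2 c hac le_rfl⟩
    · rintro μ hμ hsub ⟨a, c⟩ ⟨hac, hrel⟩
      refine ⟨hac, Or.inr (Or.inr ⟨hac, hac, fun b hb1 hb2 => ?_⟩)⟩
      have hμba : μ.rel b a := by
        rcases eq_or_lt_of_le hb2 with rfl | hb2'
        · exact hrel
        · rcases μ.total a b with h | h
          · exact absurd ⟨a, b, c, hb1, hb2', hrel, h⟩ hμ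
          · exact h
      exact (hsub (show ((a, b) : ℤ × ℤ) ∈ μ.Inversions from ⟨hb1, hμba⟩)).2
  · refine ⟨Stmt5Aux.nu0 t, ?_, ?_, ?_⟩
    · rintro ⟨a, b, c, hab, hbc, hac, hcb⟩
      rcases hac with h | ⟨-, hT⟩ | ⟨h, -⟩
      · omega
      · rcases hcb with h' | ⟨h', -⟩ | ⟨-, hT'⟩
        · omega
        · omega
        · exact hT (Stmt5Aux.T_mono hT' hab)
      · omega
    · rintro ⟨a, c⟩ ⟨hac, hrel⟩
      exact ⟨hac, Or.inr (Or.inr ⟨hac, hac, a, le_rfl, hac, hrel⟩)⟩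
    · rintro ν hν hsub ⟨a, c⟩ ⟨hac, hrel⟩
      rcases hrel with h | ⟨h, -⟩ | ⟨-, hT⟩
      · exact absurd h (by omega)
      · omega
      · obtain ⟨-, b, hb1, hb2, hb3⟩ := hT
        have hνcb : ν.rel c b :=
          (hsub (show ((b, c) : ℤ × ℤ) ∈ t.Inversions from ⟨hb2, hb3⟩)).2
        rcases eq_or_lt_of_le hb1 with rfl | hab
        · exact ⟨hac, hνcb⟩
        · rcases ν.total a c with h | h
          · exact absurd ⟨a, b, c, hab, hb2, h, hνcb⟩ hν
          · exact ⟨hac, h⟩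
end

section
/- The set of 312-avoiding TITOs is finite. Moreover, the poset of 312-avoiding TITOs under the Dyer order is order-isomorphic to the poset of 132-avoiding TITOs under the Dyer order, and the poset of 312-avoiding TITOs is self-dual: there exists a bijection φ from the set of 312-avoiding TITOs to itself such that for all 312-avoiding TITOs x and y, Inv(x) ⊆ Inv(y) if and only if Inv(φ(y)) ⊆ Inv(φ(x)). -/
/-!
A 312-avoiding TITO is determined by its inversion relation `Q a b :↔ a < b ∧ b ≺ a`, and the
relations that arise are exactly the `n`-periodic transitive relations `Q ⊆ (<)` with
`Q a c → Q a b` whenever `a < b < c`. Such a `Q` is determined by its values on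
`[0, n) × [0, 2n)`, because `Q a (a + n)` forces `Q a b` for all `b > a`; hence there are
finitely many. The map `Q ↦ (a < b ∧ ¬ Q (-v) (-a) for all v ∈ (a, b])` is an order-reversing
involution on these relations, which gives self-duality. Composing it with the order-reversing
reflection `x ↦ -x`, which exchanges 312- and 132-avoiding TITOs, gives the isomorphism.
-/

theorem Int.rel_of_forall_exists_rel {Q : ℤ → ℤ → Prop}
    (hQ : ∀ {a b c}, Q a b → Q b c → Q a c) {a c : ℤ} (hac : a < c)
    (h : ∀ v, a < v → v ≤ c → ∃ u, a ≤ u ∧ u < v ∧ Q u v) : Q a c := by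
  suffices ∀ k : ℕ, ∀ v, a < v → v ≤ c → v ≤ a + k → Q a v from
    this (c - a).toNat c hac le_rfl (by omega)
  intro k
  induction k with
  | zero => intro v hav _ hvk; omega
  | succ k ih =>
    intro v hav hvc hvk
    obtain ⟨u, hau, huv, hQuv⟩ := h v hav hvc
    rcases hau.eq_or_lt with rfl | hau
    · exact hQuv
    · exact hQ (ih u hau (by omega) (by omega)) hQuv

namespace TITO

variable {n : ℕ} {Q : ℤ → ℤ → Prop}

@[ext]
theorem ext {s t : TITO n} (h : ∀ a b, s.rel a b ↔ t.rel a b) : s = t := by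
  cases s; cases t
  congr
  funext a b
  exact propext (h a b)

def invRel (t : TITO n) (a b : ℤ) : Prop := a < b ∧ t.rel b a

theorem inversions_subset_iff {s t : TITO n} :
    s.Inversions ⊆ t.Inversions ↔ s.invRel ≤ t.invRel :=
  ⟨fun h a b hab => @h (a, b) hab, fun h p hp => h p.1 p.2 hp⟩

theorem rel_iff_not_invRel (t : TITO n) {a b : ℤ} (hab : a < b) :
    t.rel a b ↔ ¬ t.invRel a b := by
  simp only [invRel, hab, true_and]
  exact ⟨fun h h' => hab.ne (t.antisymm a b h h'), (t.total a b).resolve_right⟩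

theorem ext_invRel {s t : TITO n} (h : s.invRel = t.invRel) : s = t := by
  ext a b
  rcases lt_trichotomy a b with hab | rfl | hab
  · rw [s.rel_iff_not_invRel hab, t.rel_iff_not_invRel hab, h]
  · exact iff_of_true (s.refl a) (t.refl a)
  · simpa only [invRel, hab, true_and] using Iff.of_eq (congrFun₂ h b a)

structure IsInvRel312 (n : ℕ) (Q : ℤ → ℤ → Prop) : Prop where
  lt : ∀ {a b}, Q a b → a < b
  of_lt_of_lt : ∀ {a b c}, Q a c → a < b → b < c → Q a b
  trans : ∀ {a b c}, Q a b → Q b c → Q a c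
  add_period : ∀ a b, Q (a + n) (b + n) ↔ Q a b

theorem avoids312_iff (t : TITO n) : t.Avoids312 ↔ IsInvRel312 n t.invRel := by
  constructor
  · intro ht
    refine ⟨fun h => h.1, fun {a b c} hac hab hbc => ⟨hab, ?_⟩,
      fun hab hbc => ⟨hab.1.trans hbc.1, t.trans _ _ _ hbc.2 hab.2⟩, fun a b => ?_⟩
    · by_contra hba
      exact ht ⟨a, b, c, hab, hbc, hac.2, (t.total a b).resolve_right hba⟩
    · simp only [invRel, add_lt_add_iff_right, ← t.invariant]
  · rintro hQ ⟨a, b, c, hab, hbc, hca, hab'⟩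
    exact (t.rel_iff_not_invRel hab).mp hab' (hQ.of_lt_of_lt ⟨hab.trans hbc, hca⟩ hab hbc)

namespace IsInvRel312

theorem of_le (hQ : IsInvRel312 n Q) {a b c : ℤ} (hac : Q a c) (hab : a < b) (hbc : b ≤ c) :
    Q a b := by
  rcases hbc.eq_or_lt with rfl | hbc
  · exact hac
  · exact hQ.of_lt_of_lt hac hab hbc

end IsInvRel312

def ofInvRel (hQ : IsInvRel312 n Q) : TITO n where
  rel a b := a ≤ b ∧ ¬ Q a b ∨ b < a ∧ Q b a
  refl a := Or.inl ⟨le_rfl, fun h => (hQ.lt h).false⟩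
  antisymm a b := by
    rintro (⟨h₁, h₁'⟩ | ⟨h₁, h₁'⟩) (⟨h₂, h₂'⟩ | ⟨h₂, h₂'⟩) <;> first | omega | contradiction
  trans a b c := by
    rintro (⟨hab, hab'⟩ | ⟨hba, hba'⟩) (⟨hbc, hbc'⟩ | ⟨hcb, hcb'⟩)
    · refine Or.inl ⟨hab.trans hbc, fun hac => ?_⟩
      rcases hab.eq_or_lt with rfl | hab
      · exact hbc' hac
      · exact hab' (hQ.of_le hac hab hbc)
    · rcases le_or_gt a c with hac | hca
      · exact Or.inl ⟨hac, fun h => hab' (hQ.trans h hcb')⟩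
      · exact Or.inr ⟨hca, hQ.of_le hcb' hca hab⟩
    · rcases le_or_gt a c with hac | hca
      · exact Or.inl ⟨hac, fun h => hbc' (hQ.trans hba' h)⟩
      · refine Or.inr ⟨hca, ?_⟩
        rcases hbc.eq_or_lt with rfl | hbc
        · exact hba'
        · exact absurd (hQ.of_le hba' hbc hca.le) hbc'
    · exact Or.inr ⟨hcb.trans hba, hQ.trans hcb' hba'⟩
  total a b := by
    rcases le_or_gt a b with h | h
    · by_cases hq : Q a b
      · exact Or.inr (Or.inr ⟨hQ.lt hq, hq⟩)
      · exact Or.inl (Or.inl ⟨h, hq⟩)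
    · by_cases hq : Q b a
      · exact Or.inl (Or.inr ⟨h, hq⟩)
      · exact Or.inr (Or.inl ⟨h.le, hq⟩)
  invariant a b := by simp only [add_le_add_iff_right, add_lt_add_iff_right, hQ.add_period]

theorem invRel_ofInvRel (hQ : IsInvRel312 n Q) :
    (ofInvRel hQ).invRel = Q := by
  funext a b
  refine propext ⟨?_, fun h => ⟨hQ.lt h, Or.inr ⟨hQ.lt h, h⟩⟩⟩
  rintro ⟨hab, ⟨hba, -⟩ | ⟨-, h⟩⟩
  · exact absurd hab hba.not_gt
  · exact h

theorem avoids312_ofInvRel (hQ : IsInvRel312 n Q) :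
    (ofInvRel hQ).Avoids312 :=
  (avoids312_iff _).2 ((invRel_ofInvRel hQ).symm ▸ hQ)

namespace IsInvRel312

theorem add_mul_period (hQ : IsInvRel312 n Q) (a b k : ℤ) :
    Q (a + k * n) (b + k * n) ↔ Q a b := by
  have hper : Function.Periodic (fun x => Q (a + x) (b + x)) n := fun x => by
    simp only [← add_assoc, hQ.add_period]
  simpa using Iff.of_eq (hper.int_mul_eq k)

theorem of_add_period (hQ : IsInvRel312 n Q) {a b : ℤ} (h : Q a (a + n)) (hab : a < b) :
    Q a b := by
  have hmul : ∀ k : ℕ, Q a (a + (k + 1) * n) := by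
    intro k
    induction k with
    | zero => simpa using h
    | succ k ih =>
      have hstep := (hQ.add_mul_period a (a + n) (k + 1)).2 h
      push_cast
      rw [show a + ((k : ℤ) + 1 + 1) * n = a + n + (k + 1) * n by ring]
      exact hQ.trans ih hstep
  have hn : (1 : ℤ) ≤ n := by
    have := hQ.lt h
    omega
  refine hQ.of_le (hmul (b - a).toNat) hab ?_
  nlinarith [Int.self_le_toNat (b - a)]

theorem iff_min_period (hQ : IsInvRel312 n Q) (hn : 0 < n) {a b : ℤ} (hab : a < b) :
    Q a b ↔ Q a (a + min (b - a) n) := by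
  rcases le_total (b - a) n with h | h
  · rw [min_eq_left h, add_sub_cancel]
  · rw [min_eq_right h]
    exact ⟨fun hQab => hQ.of_le hQab (by omega) (by omega),
      fun hQan => hQ.of_add_period hQan hab⟩

theorem iff_emod (hQ : IsInvRel312 n Q) (hn : 0 < n) {a b : ℤ} (hab : a < b) :
    Q a b ↔ Q (a % n) (a % n + min (b - a) n) := by
  have hshift := hQ.add_mul_period (a % n) (a % n + (b - a)) (a / n)
  rw [Int.emod_add_ediv_mul a n, show a % n + (b - a) + a / n * n = b by
    have := Int.emod_add_ediv_mul a n; omega] at hshift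
  rw [hshift, hQ.iff_min_period hn (by omega : a % n < a % n + (b - a)), add_sub_cancel_left]

end IsInvRel312

theorem finite_setOf_avoids312 (hn : 0 < n) : {t : TITO n | t.Avoids312}.Finite := by
  let box : Set (ℤ × ℤ) := Set.Ico 0 (n : ℤ) ×ˢ Set.Ico 0 (2 * n : ℤ)
  have : Finite box := ((Set.finite_Ico _ _).prod (Set.finite_Ico _ _)).to_subtype
  refine Set.Finite.of_finite_image
    (f := fun (t : TITO n) (p : box) => t.invRel p.1.1 p.1.2) (Set.toFinite _) ?_
  intro s hs t ht hst
  have hQs := (avoids312_iff s).1 hs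
  have hQt := (avoids312_iff t).1 ht
  refine ext_invRel (funext₂ fun a b => propext ?_)
  by_cases hab : a < b
  · have hmem : (a % n, a % n + min (b - a) n) ∈ box := by
      have := Int.emod_nonneg a (by omega : (n : ℤ) ≠ 0)
      have := Int.emod_lt_of_pos a (by omega : (0 : ℤ) < n)
      exact ⟨⟨by omega, by omega⟩, by omega, by omega⟩
    rw [hQs.iff_emod hn hab, hQt.iff_emod hn hab]
    exact Iff.of_eq (congrFun hst ⟨_, hmem⟩)
  · exact iff_of_false (fun h => hab h.1) (fun h => hab h.1)

def dualInvRel (Q : ℤ → ℤ → Prop) (a b : ℤ) : Prop :=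
  a < b ∧ ∀ v, a < v → v ≤ b → ¬ Q (-v) (-a)

theorem antitone_dualInvRel : Antitone dualInvRel :=
  fun _ _ h _ _ ⟨hab, hQ⟩ => ⟨hab, fun v hav hvb hq => hQ v hav hvb (h _ _ hq)⟩

namespace IsInvRel312

theorem dual (hQ : IsInvRel312 n Q) : IsInvRel312 n (dualInvRel Q) where
  lt h := h.1
  of_lt_of_lt := fun ⟨_, h⟩ hab hbc => ⟨hab, fun v hav hvb => h v hav (hvb.trans hbc.le)⟩
  trans := by
    rintro a b c ⟨hab, h₁⟩ ⟨hbc, h₂⟩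
    refine ⟨hab.trans hbc, fun v hav hvc hq => ?_⟩
    rcases le_or_gt v b with hvb | hbv
    · exact h₁ v hav hvb hq
    · exact h₂ v hbv hvc (hQ.of_lt_of_lt hq (neg_lt_neg hbv) (neg_lt_neg hab))
  add_period a b := by
    have key (w : ℤ) : Q (-(w + n)) (-(a + n)) ↔ Q (-w) (-a) := by
      rw [← hQ.add_period]
      ring_nf
    constructor
    · rintro ⟨hab, h⟩
      exact ⟨by omega, fun w haw hwb hq => h (w + n) (by omega) (by omega) ((key w).2 hq)⟩
    · rintro ⟨hab, h⟩
      refine ⟨by omega, fun v hav hvb hq => h (v - n) (by omega) (by omega) ((key (v - n)).1 ?_)⟩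
      rwa [sub_add_cancel]

theorem dualInvRel_dualInvRel (hQ : IsInvRel312 n Q) : dualInvRel (dualInvRel Q) = Q := by
  funext a c
  refine propext ⟨?_, fun hac => ⟨hQ.lt hac, fun v hav hvc ⟨_, h⟩ => ?_⟩⟩
  · rintro ⟨hac, h⟩
    refine Int.rel_of_forall_exists_rel (Q := Q) hQ.trans hac fun v hav hvc => ?_
    have := h v hav hvc
    simp only [dualInvRel, neg_lt_neg_iff, hav, true_and, not_forall, not_not, neg_neg] at this
    obtain ⟨w, hvw, hwa, hq⟩ := this
    exact ⟨-w, by omega, by omega, hq⟩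
  · exact h (-a) (by omega) le_rfl (by simpa using hQ.of_le hac hav hvc)

theorem dualInvRel_le_dualInvRel_iff {Q' : ℤ → ℤ → Prop} (hQ : IsInvRel312 n Q)
    (hQ' : IsInvRel312 n Q') : dualInvRel Q' ≤ dualInvRel Q ↔ Q ≤ Q' := by
  refine ⟨fun h => ?_, fun h => antitone_dualInvRel h⟩
  simpa only [hQ.dualInvRel_dualInvRel, hQ'.dualInvRel_dualInvRel] using antitone_dualInvRel h

end IsInvRel312

def dual312 (t : {t : TITO n // t.Avoids312}) : {t : TITO n // t.Avoids312} :=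
  ⟨ofInvRel ((avoids312_iff _).1 t.2).dual, avoids312_ofInvRel _⟩

theorem invRel_dual312 (t : {t : TITO n // t.Avoids312}) :
    (dual312 t).1.invRel = dualInvRel t.1.invRel :=
  invRel_ofInvRel ((avoids312_iff _).1 t.2).dual

theorem dual312_involutive : Function.Involutive (dual312 (n := n)) := fun t =>
  Subtype.ext <| ext_invRel <| by
    rw [invRel_dual312, invRel_dual312, ((avoids312_iff _).1 t.2).dualInvRel_dualInvRel]

theorem dual312_inversions_subset_iff (s t : {t : TITO n // t.Avoids312}) :
    (dual312 t).1.Inversions ⊆ (dual312 s).1.Inversions ↔ s.1.Inversions ⊆ t.1.Inversions := by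
  simp only [inversions_subset_iff, invRel_dual312]
  exact ((avoids312_iff _).1 s.2).dualInvRel_le_dualInvRel_iff ((avoids312_iff _).1 t.2)

instance : InvolutiveNeg (TITO n) where
  neg t :=
    { rel := fun a b => t.rel (-a) (-b)
      refl := fun a => t.refl (-a)
      antisymm := fun _ _ h₁ h₂ => neg_injective (t.antisymm _ _ h₁ h₂)
      trans := fun a b c => t.trans (-a) (-b) (-c)
      total := fun a b => t.total (-a) (-b)
      invariant := fun a b => by
        rw [t.invariant (-(a + n)) (-(b + n))]
        ring_nf }
  neg_neg t := by ext; simp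

theorem rel_neg (t : TITO n) (a b : ℤ) : (-t).rel a b ↔ t.rel (-a) (-b) := Iff.rfl

theorem invRel_neg (t : TITO n) (a b : ℤ) :
    (-t).invRel a b ↔ a < b ∧ ¬ t.invRel (-b) (-a) := by
  simp only [invRel, rel_neg]
  exact and_congr_right fun hab => t.rel_iff_not_invRel (neg_lt_neg hab)

theorem invRel_neg_le_invRel_neg {s t : TITO n} (h : s.invRel ≤ t.invRel) :
    (-t).invRel ≤ (-s).invRel := by
  intro a b hab
  rw [invRel_neg] at hab ⊢
  exact ⟨hab.1, fun hs => hab.2 (h _ _ hs)⟩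

theorem neg_inversions_subset_iff {s t : TITO n} :
    (-s).Inversions ⊆ (-t).Inversions ↔ t.Inversions ⊆ s.Inversions := by
  simp only [inversions_subset_iff]
  refine ⟨fun h => ?_, invRel_neg_le_invRel_neg⟩
  simpa only [neg_neg] using invRel_neg_le_invRel_neg h

theorem Avoids312.neg {t : TITO n} (ht : t.Avoids312) : (-t).Avoids132 :=
  fun ⟨a, b, c, hab, hbc, h₁, h₂⟩ => ht ⟨-c, -b, -a, by omega, by omega, h₁, h₂⟩

theorem Avoids132.neg {t : TITO n} (ht : t.Avoids132) : (-t).Avoids312 :=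
  fun ⟨a, b, c, hab, hbc, h₁, h₂⟩ => ht ⟨-c, -b, -a, by omega, by omega, h₁, h₂⟩

def negEquiv : {t : TITO n // t.Avoids312} ≃ {t : TITO n // t.Avoids132} where
  toFun t := ⟨-t.1, t.2.neg⟩
  invFun t := ⟨-t.1, t.2.neg⟩
  left_inv t := Subtype.ext (neg_neg t.1)
  right_inv t := Subtype.ext (neg_neg t.1)

end TITO

theorem stmt6 (n : ℕ) (hn : 2 ≤ n) :
    {t : TITO n | t.Avoids312}.Finite ∧
    (∃ φ : {t : TITO n // t.Avoids312} → {t : TITO n // t.Avoids132},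
      Function.Bijective φ ∧
      ∀ x y : {t : TITO n // t.Avoids312},
        x.val.Inversions ⊆ y.val.Inversions ↔ (φ x).val.Inversions ⊆ (φ y).val.Inversions) ∧
    (∃ ψ : {t : TITO n // t.Avoids312} → {t : TITO n // t.Avoids312},
      Function.Bijective ψ ∧
      ∀ x y : {t : TITO n // t.Avoids312},
        x.val.Inversions ⊆ y.val.Inversions ↔ (ψ y).val.Inversions ⊆ (ψ x).val.Inversions) := by
  refine ⟨TITO.finite_setOf_avoids312 (by omega),
    ⟨TITO.negEquiv ∘ TITO.dual312, TITO.negEquiv.bijective.comp TITO.dual312_involutive.bijective,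
      fun x y => ?_⟩,
    ⟨TITO.dual312, TITO.dual312_involutive.bijective,
      fun x y => (TITO.dual312_inversions_subset_iff x y).symm⟩⟩
  rw [← TITO.dual312_inversions_subset_iff]
  exact TITO.neg_inversions_subset_iff.symm
end

section
/- The poset of 312-avoiding real TITOs, ordered by the Dyer order, is a lattice: for any two 312-avoiding real TITOs x and y, there exists a 312-avoiding real TITO that is a greatest lower bound of {x, y} within this poset, and there exists a 312-avoiding real TITO that is a least upper bound of {x, y} within this poset. -/
/-!
A 312-avoiding TITO is determined by its inversion set, and the inversion sets of such TITOs are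
exactly the sets `S` of pairs `a < b` that are `n`-periodic, transitive, and closed under
shrinking the larger entry (`IsTamariSet`). Such sets are closed under intersections. Realness
only involves the points `a` with `(a, b) ∈ S` for all `b > a`: the TITO is real iff these points
do not all lie in a single residue class mod `n`. When they do, discarding every pair `(a, b)` with
`b ≥ a + n` gives the largest real such set below `S`. So every family has a greatest real lower
bound; this is the meet of two elements, and the join is the greatest real lower bound of all
their real upper bounds.
-/

namespace AffineTamari

variable {n : ℕ}

lemma not_modEq_of_lt_of_lt {a b : ℤ} (hab : a < b) (hb : b < a + n) : ¬ b ≡ a [ZMOD n] := by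
  intro h
  obtain ⟨k, hk⟩ := Int.modEq_iff_dvd.mp h
  rcases lt_trichotomy k 0 with hk0 | rfl | hk0 <;> nlinarith

lemma exists_lt_add_mul (hn : 0 < n) (a y : ℤ) : ∃ k : ℤ, y < a + k * n :=
  ⟨|y - a| + 1, by nlinarith [le_abs_self (y - a), abs_nonneg (y - a)]⟩

lemma exists_add_mul_lt (hn : 0 < n) (a y : ℤ) : ∃ k : ℤ, a + k * n < y :=
  ⟨-(|y - a| + 1), by nlinarith [neg_abs_le (y - a), abs_nonneg (y - a)]⟩

structure IsTamariSet (n : ℕ) (S : Set (ℤ × ℤ)) : Prop where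
  lt : ∀ ⦃a b⦄, (a, b) ∈ S → a < b
  mem_add_iff : ∀ a b : ℤ, (a + n, b + n) ∈ S ↔ (a, b) ∈ S
  trans : ∀ ⦃a b c⦄, (a, b) ∈ S → (b, c) ∈ S → (a, c) ∈ S
  mem_of_le : ∀ ⦃a b c⦄, a < b → b ≤ c → (a, c) ∈ S → (a, b) ∈ S

def Unbounded (S : Set (ℤ × ℤ)) (a : ℤ) : Prop := ∀ b, a < b → (a, b) ∈ S

def IsRealSet (n : ℕ) (S : Set (ℤ × ℤ)) : Prop :=
  ∀ a, Unbounded S a → ∃ b, Unbounded S b ∧ ¬ b ≡ a [ZMOD n]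

def trunc (n : ℕ) (S : Set (ℤ × ℤ)) : Set (ℤ × ℤ) := {p | p ∈ S ∧ p.2 < p.1 + n}

namespace IsTamariSet

variable {S : Set (ℤ × ℤ)} (hS : IsTamariSet n S)
include hS

lemma unbounded_of_mem {a b : ℤ} (hab : (a, b) ∈ S) (hb : Unbounded S b) : Unbounded S a := by
  intro c hac
  rcases le_or_gt c b with hcb | hbc
  · exact hS.mem_of_le hac hcb hab
  · exact hS.trans hab (hb c hbc)

lemma unbounded_add_iff (a : ℤ) : Unbounded S (a + n) ↔ Unbounded S a := by
  refine ⟨fun h c hac => ?_, fun h c hac => ?_⟩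
  · exact (hS.mem_add_iff a c).mp (h (c + n) (by omega))
  · simpa using (hS.mem_add_iff a (c - n)).mpr (h (c - n) (by omega))

lemma unbounded_of_modEq {a b : ℤ} (ha : Unbounded S a) (hab : b ≡ a [ZMOD n]) :
    Unbounded S b := by
  obtain ⟨k, rfl⟩ := Int.modEq_iff_add_fac.mp hab.symm
  clear hab
  induction k using Int.induction_on with
  | zero => simpa using ha
  | succ k ih => rw [mul_add_one, ← add_assoc, hS.unbounded_add_iff]; exact ih
  | pred k ih =>
    rw [← hS.unbounded_add_iff, show a + n * (-k - 1) + n = a + n * -k by ring]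
    exact ih

lemma unbounded_of_mem_add {a : ℤ} (ha : (a, a + n) ∈ S) : Unbounded S a := by
  have hn : 0 < n := by have := hS.lt ha; omega
  have hmul : ∀ m : ℕ, ∀ a : ℤ, (a, a + n) ∈ S → (a, a + (m + 1) * n) ∈ S := by
    intro m
    induction m with
    | zero => simp
    | succ m ih =>
      intro a ha
      have hnext := ih (a + n) ((hS.mem_add_iff a (a + n)).mpr ha)
      convert hS.trans ha hnext using 2
      push_cast
      ring
  intro c hac
  refine hS.mem_of_le hac ?_ (hmul (c - a).toNat a ha)
  have : c - a ≤ (c - a).toNat := Int.self_le_toNat _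
  nlinarith

lemma isTamariSet_trunc (hU : ∀ a b, Unbounded S a → Unbounded S b → b ≡ a [ZMOD n]) :
    IsTamariSet n (trunc n S) where
  lt _ _ h := hS.lt h.1
  mem_add_iff a b := and_congr (hS.mem_add_iff a b) (by omega)
  trans a b c hab hbc := by
    refine ⟨hS.trans hab.1 hbc.1, ?_⟩
    by_contra! hca
    have hab' := hS.lt hab.1
    have hbn := hab.2
    have ha : Unbounded S a :=
      hS.unbounded_of_mem_add (hS.mem_of_le (by omega) hca (hS.trans hab.1 hbc.1))
    have hb : Unbounded S b :=
      hS.unbounded_of_mem (hS.mem_of_le hbn hca hbc.1) ((hS.unbounded_add_iff a).mpr ha)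
    exact not_modEq_of_lt_of_lt hab' hbn (hU a b ha hb)
  mem_of_le a b c hab hbc hac := ⟨hS.mem_of_le hab hbc hac.1, by have := hac.2; omega⟩

lemma subset_trunc (hn : 0 < n) {T : Set (ℤ × ℤ)} (hTS : S ⊆ T) (hSr : IsRealSet n S)
    (hU : ∀ a b, Unbounded T a → Unbounded T b → b ≡ a [ZMOD n]) : S ⊆ trunc n T := by
  rintro ⟨a, b⟩ hab
  refine ⟨hTS hab, ?_⟩
  by_contra! hba
  have ha := hS.unbounded_of_mem_add (hS.mem_of_le (by omega) hba hab)
  obtain ⟨c, hc, hca⟩ := hSr a ha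
  exact hca (hU a c (fun d hd => hTS (ha d hd)) (fun d hd => hTS (hc d hd)))

end IsTamariSet

lemma not_unbounded_trunc (S : Set (ℤ × ℤ)) (a : ℤ) : ¬ Unbounded (trunc n S) a :=
  fun h => by have := (h (a + n + 1) (by omega)).2; omega

def realTamari (n : ℕ) : Set (Set (ℤ × ℤ)) := {S | IsTamariSet n S ∧ IsRealSet n S}

theorem IsTamariSet.exists_isGreatest_realTamari_subset (hn : 0 < n) {S : Set (ℤ × ℤ)}
    (hS : IsTamariSet n S) : ∃ M, IsGreatest (realTamari n ∩ Set.Iic S) M := by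
  by_cases hSr : IsRealSet n S
  · exact ⟨S, ⟨⟨hS, hSr⟩, Set.mem_Iic.mpr le_rfl⟩, fun _ hT => hT.2⟩
  · simp only [IsRealSet, not_forall, not_exists, not_and, not_not] at hSr
    obtain ⟨a₀, -, hU₀⟩ := hSr
    have hU : ∀ a b, Unbounded S a → Unbounded S b → b ≡ a [ZMOD n] :=
      fun a b ha hb => (hU₀ b hb).trans (hU₀ a ha).symm
    refine ⟨trunc n S, ⟨⟨hS.isTamariSet_trunc hU, fun a ha => (not_unbounded_trunc S a ha).elim⟩,
      fun p hp => hp.1⟩, fun T ⟨⟨hT, hTr⟩, hTS⟩ => hT.subset_trunc hn hTS hTr hU⟩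

lemma isTamariSet_sInter {F : Set (Set (ℤ × ℤ))} (hF : ∀ T ∈ F, IsTamariSet n T) :
    IsTamariSet n ({p | p.1 < p.2} ∩ ⋂₀ F) where
  lt _ _ h := h.1
  mem_add_iff a b := and_congr (by simp) <| by
    simp only [Set.mem_sInter]
    exact forall₂_congr fun T hT => (hF T hT).mem_add_iff a b
  trans a b c hab hbc := ⟨show a < c from lt_trans hab.1 hbc.1,
    fun T hT => (hF T hT).trans (hab.2 T hT) (hbc.2 T hT)⟩
  mem_of_le _ _ _ hab hbc hac := ⟨hab, fun T hT => (hF T hT).mem_of_le hab hbc (hac.2 T hT)⟩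

theorem exists_isGreatest_realTamari_lowerBounds (hn : 0 < n) {F : Set (Set (ℤ × ℤ))}
    (hF : ∀ T ∈ F, IsTamariSet n T) : ∃ M, IsGreatest (realTamari n ∩ lowerBounds F) M := by
  obtain ⟨M, ⟨hM, hMS⟩, hMg⟩ := (isTamariSet_sInter hF).exists_isGreatest_realTamari_subset hn
  refine ⟨M, ⟨hM, fun T hT => hMS.trans <|
      Set.inter_subset_right.trans (Set.sInter_subset_of_mem hT)⟩,
    fun W ⟨hW, hWF⟩ => hMg ⟨hW, fun p hp => ⟨hW.1.lt hp, Set.mem_sInter.mpr fun T hT => hWF hT hp⟩⟩⟩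

end AffineTamari

namespace TITO

open AffineTamari

variable {n : ℕ}

lemma Avoids312.isTamariSet_inversions {t : TITO n} (ht : t.Avoids312) :
    IsTamariSet n t.Inversions where
  lt _ _ h := h.1
  mem_add_iff a b := and_congr (by omega) (t.invariant b a).symm
  trans a b c hab hbc := ⟨hab.1.trans hbc.1, t.trans c b a hbc.2 hab.2⟩
  mem_of_le a b c hab hbc hac := by
    refine ⟨hab, (t.total a b).resolve_left fun hab' => ?_⟩
    rcases hbc.lt_or_eq with hbc | rfl
    · exact ht ⟨a, b, c, hab, hbc, hac.2, hab'⟩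
    · exact hab.ne (t.antisymm a b hab' hac.2)

lemma isRealSet_inversions (hn : 0 < n) {t : TITO n} (ht : t.Avoids312) (htr : t.IsReal) :
    IsRealSet n t.Inversions := by
  have hS := ht.isTamariSet_inversions
  intro a ha
  by_contra! hcl
  have hconv : t.OrderConvex {x | ∃ k : ℤ, x = a + k * n} := by
    rintro _ ⟨k, rfl⟩ _ - u hxu -
    have hx : Unbounded t.Inversions (a + k * n) :=
      hS.unbounded_of_modEq ha (Int.modEq_iff_add_fac.mpr ⟨k, by ring⟩).symm
    rcases lt_trichotomy u (a + k * n) with hu | rfl | hu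
    -- `u` lies ≼-above the larger unbounded point `a + k * n`, so `u` is unbounded too
    · obtain ⟨j, hj⟩ := Int.modEq_iff_add_fac.mp (hcl u (hS.unbounded_of_mem ⟨hu, hxu⟩ hx)).symm
      exact ⟨j, by rw [hj]; ring⟩
    · exact ⟨k, rfl⟩
    · exact absurd (t.antisymm _ _ hxu (hx u hu).2) hu.ne
  exact absurd (t.antisymm _ _ (htr a hconv) (ha (a + n) (by omega)).2) (by omega)

lemma inversions_mem_realTamari (hn : 0 < n) {t : TITO n} (ht : t.Avoids312) (htr : t.IsReal) :
    t.Inversions ∈ realTamari n :=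
  ⟨ht.isTamariSet_inversions, isRealSet_inversions hn ht htr⟩

def ofSet (S : Set (ℤ × ℤ)) (hS : IsTamariSet n S) : TITO n where
  rel a b := a = b ∨ (a < b ∧ (a, b) ∉ S) ∨ (b < a ∧ (b, a) ∈ S)
  refl _ := Or.inl rfl
  antisymm a b := by
    rintro (h | ⟨h, hab⟩ | ⟨h, hab⟩) (h' | ⟨h', hba⟩ | ⟨h', hba⟩) <;> first | omega | contradiction
  trans a b c hab hbc := by
    rcases hab with rfl | ⟨hab, hab'⟩ | ⟨hba, hba'⟩
    · exact hbc
    all_goals rcases hbc with rfl | ⟨hbc, hbc'⟩ | ⟨hcb, hcb'⟩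
    · exact Or.inr (Or.inl ⟨hab, hab'⟩)
    · exact Or.inr (Or.inl ⟨hab.trans hbc, fun hac => hab' (hS.mem_of_le hab hbc.le hac)⟩)
    · rcases lt_trichotomy a c with hac | rfl | hca
      · exact Or.inr (Or.inl ⟨hac, fun hac' => hab' (hS.trans hac' hcb')⟩)
      · exact Or.inl rfl
      · exact Or.inr (Or.inr ⟨hca, hS.mem_of_le hca hab.le hcb'⟩)
    · exact Or.inr (Or.inr ⟨hba, hba'⟩)
    · rcases lt_trichotomy a c with hac | rfl | hca
      · exact Or.inr (Or.inl ⟨hac, fun hac' => hbc' (hS.trans hba' hac')⟩)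
      · exact Or.inl rfl
      · exact absurd (hS.mem_of_le hbc hca.le hba') hbc'
    · exact Or.inr (Or.inr ⟨hcb.trans hba, hS.trans hcb' hba'⟩)
  total a b := by
    rcases lt_trichotomy a b with h | rfl | h
    · by_cases hab : (a, b) ∈ S
      · exact Or.inr (Or.inr (Or.inr ⟨h, hab⟩))
      · exact Or.inl (Or.inr (Or.inl ⟨h, hab⟩))
    · exact Or.inl (Or.inl rfl)
    · by_cases hba : (b, a) ∈ S
      · exact Or.inl (Or.inr (Or.inr ⟨h, hba⟩))
      · exact Or.inr (Or.inr (Or.inl ⟨h, hba⟩))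
  invariant a b := by
    simp only [add_left_inj, add_lt_add_iff_right, hS.mem_add_iff]

variable {S : Set (ℤ × ℤ)} (hS : IsTamariSet n S)

lemma ofSet_rel_of_lt {a b : ℤ} (hab : a < b) : (ofSet S hS).rel b a ↔ (a, b) ∈ S := by
  refine ⟨?_, fun h => Or.inr (Or.inr ⟨hab, h⟩)⟩
  rintro (rfl | ⟨hba, -⟩ | ⟨-, h⟩)
  · exact absurd hab (lt_irrefl _)
  · exact absurd hab hba.not_gt
  · exact h

lemma inversions_ofSet : (ofSet S hS).Inversions = S := by
  ext ⟨a, b⟩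
  exact ⟨fun h => (ofSet_rel_of_lt hS h.1).mp h.2,
    fun h => ⟨hS.lt h, (ofSet_rel_of_lt hS (hS.lt h)).mpr h⟩⟩

lemma avoids312_ofSet : (ofSet S hS).Avoids312 := by
  rintro ⟨a, b, c, hab, hbc, hca, hab'⟩
  have hac := (ofSet_rel_of_lt hS (hab.trans hbc)).mp hca
  rcases hab' with rfl | ⟨-, hab'⟩ | ⟨hba, -⟩
  · exact lt_irrefl a hab
  · exact hab' (hS.mem_of_le hab hbc.le hac)
  · exact hab.not_gt hba

lemma isReal_ofSet (hn : 0 < n) (hSr : IsRealSet n S) : (ofSet S hS).IsReal := by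
  intro a hconv
  refine Or.inr (Or.inl ⟨by omega, fun haS => ?_⟩)
  have ha := hS.unbounded_of_mem_add haS
  obtain ⟨y, hy, hya⟩ := hSr a ha
  obtain ⟨k, hk⟩ := exists_lt_add_mul hn a y
  obtain ⟨l, hl⟩ := exists_add_mul_lt hn a y
  have hl' : Unbounded S (a + l * n) :=
    hS.unbounded_of_modEq ha (Int.modEq_iff_add_fac.mpr ⟨l, by ring⟩).symm
  obtain ⟨j, rfl⟩ := hconv (a + k * n) ⟨k, rfl⟩ (a + l * n) ⟨l, rfl⟩ y
    (Or.inr (Or.inr ⟨hk, hy _ hk⟩)) (Or.inr (Or.inr ⟨hl, hl' y hl⟩))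
  exact hya (Int.modEq_iff_add_fac.mpr ⟨j, by ring⟩).symm

lemma exists_inversions_eq (hn : 0 < n) (hS : S ∈ realTamari n) :
    ∃ t : TITO n, t.Avoids312 ∧ t.IsReal ∧ t.Inversions = S :=
  ⟨ofSet S hS.1, avoids312_ofSet hS.1, isReal_ofSet hS.1 hn hS.2, inversions_ofSet hS.1⟩

end TITO

open AffineTamari TITO in
theorem stmt7 (n : ℕ) (hn : 2 ≤ n) (x y : TITO n) (hx : x.Avoids312 ∧ x.IsReal)
    (hy : y.Avoids312 ∧ y.IsReal) :
    (∃ m : TITO n, m.Avoids312 ∧ m.IsReal ∧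
      m.Inversions ⊆ x.Inversions ∧ m.Inversions ⊆ y.Inversions ∧
      ∀ w : TITO n, w.Avoids312 → w.IsReal →
        w.Inversions ⊆ x.Inversions → w.Inversions ⊆ y.Inversions →
        w.Inversions ⊆ m.Inversions) ∧
    (∃ j : TITO n, j.Avoids312 ∧ j.IsReal ∧
      x.Inversions ⊆ j.Inversions ∧ y.Inversions ⊆ j.Inversions ∧
      ∀ w : TITO n, w.Avoids312 → w.IsReal →
        x.Inversions ⊆ w.Inversions → y.Inversions ⊆ w.Inversions →
        j.Inversions ⊆ w.Inversions) := by
  have hn : 0 < n := by omega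
  have hX := inversions_mem_realTamari hn hx.1 hx.2
  have hY := inversions_mem_realTamari hn hy.1 hy.2
  constructor
  · obtain ⟨M, ⟨hM, hMF⟩, hMg⟩ := exists_isGreatest_realTamari_lowerBounds hn
      (F := {x.Inversions, y.Inversions}) (by rintro T (rfl | rfl) <;> [exact hX.1; exact hY.1])
    obtain ⟨m, hma, hmr, rfl⟩ := exists_inversions_eq hn hM
    refine ⟨m, hma, hmr, hMF (by simp), hMF (by simp), fun w hwa hwr hwx hwy => ?_⟩
    exact hMg ⟨inversions_mem_realTamari hn hwa hwr, by simp [lowerBounds, hwx, hwy]⟩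
  · obtain ⟨J, ⟨hJ, hJF⟩, hJg⟩ := exists_isGreatest_realTamari_lowerBounds hn
      (F := realTamari n ∩ upperBounds {x.Inversions, y.Inversions}) fun T hT => hT.1.1
    obtain ⟨j, hja, hjr, rfl⟩ := exists_inversions_eq hn hJ
    refine ⟨j, hja, hjr, hJg ⟨hX, fun T hT => hT.2 (by simp)⟩, hJg ⟨hY, fun T hT => hT.2 (by simp)⟩,
      fun w hwa hwr hwx hwy => ?_⟩
    exact hJF ⟨inversions_mem_realTamari hn hwa hwr, by simp [upperBounds, hwx, hwy]⟩
end

section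
/- For every 312-avoiding TITO ≼, the set of 312-avoiding real TITOs μ with Inv(μ) ⊆ Inv(≼) has a greatest element with respect to the Dyer order: there is a 312-avoiding real TITO μ₀ with Inv(μ₀) ⊆ Inv(≼) such that Inv(μ) ⊆ Inv(μ₀) for every 312-avoiding real TITO μ with Inv(μ) ⊆ Inv(≼). -/
/-!
In a 312-avoiding TITO a waning element `w` (one with `w + n ≼ w`) lies above every `b > w`,
and every element above a waning one is waning. Hence if two waning elements are incongruent
mod `n`, no residue class containing a waning element is order-convex, and `t` itself is real.
Otherwise the waning elements form at most one residue class; placing each waning `w` between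
the non-waning `b < w + n` and the non-waning `b ≥ w + n`, and keeping `t` on the non-waning
elements, gives a real 312-avoiding TITO whose inversions are those of `t` minus the pairs
`(w, b)` with `b ≥ w + n`. A real 312-avoiding `μ` below `t` has none of these pairs: such a
pair would make `w` waning for `μ`, and its residue class, the only possible waning class of
`μ`, would then be `μ`-convex.
-/

namespace TITO

variable {n : ℕ}

def IsWaning (t : TITO n) (a : ℤ) : Prop := t.rel (a + n) a

theorem mem_residueClass_iff {a x : ℤ} :
    x ∈ {x : ℤ | ∃ k : ℤ, x = a + k * n} ↔ x ≡ a [ZMOD n] := by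
  constructor
  · rintro ⟨k, rfl⟩
    exact Int.add_mul_emod_self_right a k n
  · intro h
    obtain ⟨k, hk⟩ := Int.modEq_iff_add_fac.mp h.symm
    exact ⟨k, by linarith⟩

theorem rel_add_mul_iff (t : TITO n) (k : ℤ) {a b : ℤ} :
    t.rel (a + k * n) (b + k * n) ↔ t.rel a b := by
  induction k using Int.induction_on with
  | zero => simp
  | succ k ih =>
    rw [← ih, t.invariant (a + k * n), add_one_mul, ← add_assoc, ← add_assoc]
  | pred k ih =>
    rw [← ih, t.invariant (a + (-k - 1) * n), add_assoc, add_assoc, ← add_one_mul,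
      sub_add_cancel]

theorem isWaning_congr (t : TITO n) {a b : ℤ} (h : a ≡ b [ZMOD n]) :
    t.IsWaning a ↔ t.IsWaning b := by
  obtain ⟨k, rfl⟩ := mem_residueClass_iff.mpr h.symm
  rw [IsWaning, IsWaning, ← t.rel_add_mul_iff k (a := a + n)]
  ring_nf

theorem isWaning_add_iff (t : TITO n) {a : ℤ} : t.IsWaning (a + n) ↔ t.IsWaning a :=
  t.isWaning_congr (by simp [Int.ModEq])

theorem rel_add_mul_of_isWaning (t : TITO n) {a : ℤ} (ha : t.IsWaning a) (k : ℕ) :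
    t.rel (a + k * n) a := by
  induction k with
  | zero => simpa using t.refl a
  | succ k ih =>
    have hk : t.IsWaning (a + k * n) := (t.isWaning_congr (by simp [Int.ModEq])).mpr ha
    rw [Nat.cast_succ, add_one_mul, ← add_assoc]
    exact t.trans _ _ _ hk ih

namespace Avoids312

variable {t : TITO n} (ht : t.Avoids312)
include ht

theorem rel_of_lt_of_le {a b c : ℤ} (hab : a < b) (hbc : b ≤ c) (hca : t.rel c a) :
    t.rel b a := by
  rcases hbc.eq_or_lt with rfl | hbc
  · exact hca
  · exact (t.total a b).resolve_left fun h => ht ⟨a, b, c, hab, hbc, hca, h⟩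

theorem rel_of_isWaning (hn : 0 < n) {a b : ℤ} (ha : t.IsWaning a) (hab : a < b) :
    t.rel b a := by
  have hk : b ≤ a + (b - a).toNat * n := by
    have : (b - a).toNat ≤ (b - a).toNat * (n : ℤ) :=
      le_mul_of_one_le_right (Int.natCast_nonneg _) (by exact_mod_cast hn)
    omega
  exact ht.rel_of_lt_of_le hab hk (t.rel_add_mul_of_isWaning ha _)

theorem isWaning_of_rel (hn : 0 < n) {a b : ℤ} (ha : t.IsWaning a) (hab : t.rel a b) :
    t.IsWaning b := by
  rcases le_or_gt (b + n) a with h | h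
  · exact ht.rel_of_lt_of_le (by omega) h hab
  · exact t.trans _ _ _ (ht.rel_of_isWaning hn ha h) hab

theorem rel_of_isWaning_between (hn : 0 < n) {a w b : ℤ} (hw : t.IsWaning w)
    (ha : ¬ t.IsWaning a) (haw : a < w) (hwb : w ≤ b) : t.rel a b :=
  (t.total a b).resolve_right fun hba =>
    ha (ht.isWaning_of_rel hn hw (ht.rel_of_lt_of_le haw hwb hba))

theorem orderConvex_residueClass_iff (hn : 0 < n) {a : ℤ} (ha : t.IsWaning a) :
    t.OrderConvex {x : ℤ | ∃ k : ℤ, x = a + k * n} ↔ ∀ c, t.IsWaning c → c ≡ a [ZMOD n] := by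
  constructor
  · intro hconv c hc
    have hr0 : 0 ≤ (c - a) % n := Int.emod_nonneg _ (by omega)
    have hrn : (c - a) % n < n := Int.emod_lt_of_pos _ (by omega)
    have hc' : a + (c - a) % n ≡ c [ZMOD n] := by
      simpa using (Int.mod_modEq (c - a) n).add_left a
    have hw : t.IsWaning (a + (c - a) % n) := (t.isWaning_congr hc').mpr hc
    have hmem : a + (c - a) % n ∈ {x : ℤ | ∃ k : ℤ, x = a + k * n} := by
      refine hconv (a + n) ⟨1, by ring⟩ a ⟨0, by ring⟩ _
        (ht.rel_of_isWaning hn hw (by omega)) ?_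
      rcases hr0.eq_or_lt with h | h
      · rw [← h, add_zero]
        exact t.refl a
      · exact ht.rel_of_isWaning hn ha (by omega)
    exact hc'.symm.trans (mem_residueClass_iff.mp hmem)
  · intro hclass x hx z _ y hxy _
    have hxa := mem_residueClass_iff.mp hx
    exact mem_residueClass_iff.mpr
      (hclass y (ht.isWaning_of_rel hn ((t.isWaning_congr hxa).mpr ha) hxy))

theorem isReal_or_modEq_of_isWaning (hn : 0 < n) :
    t.IsReal ∨ ∀ x y, t.IsWaning x → t.IsWaning y → x ≡ y [ZMOD n] := by
  rw [or_iff_not_imp_right]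
  intro hne a hconv
  by_contra hna
  have ha : t.IsWaning a := (t.total a (a + n)).resolve_left hna
  have hclass := (ht.orderConvex_residueClass_iff hn ha).mp hconv
  exact hne fun x y hx hy => (hclass x hx).trans (hclass y hy).symm

end Avoids312

def realCoreRel (t : TITO n) (a b : ℤ) : Prop :=
  open Classical in
  if t.IsWaning a then (if t.IsWaning b then a ≤ b else a + n ≤ b)
  else (if t.IsWaning b then a < b + n else t.rel a b)

theorem realCoreRel_refl (t : TITO n) (a : ℤ) : t.realCoreRel a a := by
  unfold realCoreRel
  split_ifs
  · exact le_rfl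
  · exact t.refl a

theorem realCoreRel_antisymm (t : TITO n) {a b : ℤ} (hab : t.realCoreRel a b)
    (hba : t.realCoreRel b a) : a = b := by
  unfold realCoreRel at *
  split_ifs at hab hba
  all_goals first | omega | exact t.antisymm _ _ hab hba

theorem realCoreRel_total (t : TITO n) (a b : ℤ) : t.realCoreRel a b ∨ t.realCoreRel b a := by
  unfold realCoreRel
  split_ifs
  all_goals first | omega | exact t.total a b

theorem realCoreRel_add_iff (t : TITO n) {a b : ℤ} :
    t.realCoreRel (a + n) (b + n) ↔ t.realCoreRel a b := by
  by_cases ha : t.IsWaning a <;> by_cases hb : t.IsWaning b <;>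
    simp only [realCoreRel, t.isWaning_add_iff, ha, hb, if_true, if_false, ← t.invariant,
      add_le_add_iff_right, add_lt_add_iff_right]

theorem add_le_of_isWaning (t : TITO n)
    (hclass : ∀ x y, t.IsWaning x → t.IsWaning y → x ≡ y [ZMOD n]) {a b : ℤ}
    (ha : t.IsWaning a) (hb : t.IsWaning b) (hab : a < b) : a + n ≤ b := by
  have := Int.le_of_dvd (by omega) (hclass a b ha hb).dvd
  omega

section realCore

variable {t : TITO n} (hn : 0 < n) (ht : t.Avoids312)
include hn ht

theorem realCoreRel_trans {a b c : ℤ} (hab : t.realCoreRel a b) (hbc : t.realCoreRel b c) :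
    t.realCoreRel a c := by
  unfold realCoreRel at *
  by_cases ha : t.IsWaning a <;> by_cases hb : t.IsWaning b <;> by_cases hc : t.IsWaning c <;>
    simp only [ha, hb, hc, if_true, if_false] at hab hbc ⊢
  · omega
  · omega
  · omega
  · by_contra! hca
    have hcb := ht.rel_of_isWaning_between hn (t.isWaning_add_iff.mpr ha) hc hca hab
    have := t.antisymm _ _ hbc hcb
    omega
  · omega
  · exact ht.rel_of_isWaning_between hn (t.isWaning_add_iff.mpr hb) ha hab hbc
  · by_contra! hca
    have hba := ht.rel_of_isWaning_between hn (t.isWaning_add_iff.mpr hc) hb hbc hca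
    have := t.antisymm _ _ hab hba
    omega
  · exact t.trans _ _ _ hab hbc

def realCore : TITO n where
  rel := t.realCoreRel
  refl := t.realCoreRel_refl
  antisymm _ _ := t.realCoreRel_antisymm
  trans _ _ _ := realCoreRel_trans hn ht
  total := t.realCoreRel_total
  invariant _ _ := t.realCoreRel_add_iff.symm

theorem realCore_isReal : (t.realCore hn ht).IsReal := by
  intro a _
  by_cases ha : t.IsWaning a
  · simp only [realCore, realCoreRel, t.isWaning_add_iff, ha, if_true]
    omega
  · simp only [realCore, realCoreRel, t.isWaning_add_iff, ha, if_false]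
    exact (t.total a (a + n)).resolve_right ha

theorem inversions_realCore_subset : (t.realCore hn ht).Inversions ⊆ t.Inversions := by
  rintro ⟨a, b⟩ ⟨hab, hba⟩
  refine ⟨hab, ?_⟩
  dsimp only at hab hba ⊢
  by_cases ha : t.IsWaning a <;> by_cases hb : t.IsWaning b <;>
    simp only [realCore, realCoreRel, ha, hb, if_true, if_false] at hba
  · omega
  · exact ht.rel_of_isWaning hn ha hab
  · omega
  · exact hba

variable (hclass : ∀ x y, t.IsWaning x → t.IsWaning y → x ≡ y [ZMOD n])
include hclass

theorem realCore_avoids312 : (t.realCore hn ht).Avoids312 := by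
  rintro ⟨a, b, c, hab, hbc, hca, hab'⟩
  by_cases ha : t.IsWaning a <;> by_cases hb : t.IsWaning b <;> by_cases hc : t.IsWaning c <;>
    simp only [realCore, realCoreRel, ha, hb, hc, if_true, if_false] at hca hab'
  · omega
  · have := t.add_le_of_isWaning hclass ha hb hab
    omega
  · omega
  · omega
  · omega
  · exact ht ⟨a, b, c, hab, hbc, hca, ht.rel_of_isWaning_between hn hb ha hab le_rfl⟩
  · omega
  · exact ht ⟨a, b, c, hab, hbc, hca, hab'⟩

theorem inversions_subset_realCore {μ : TITO n} (hμ : μ.Avoids312) (hreal : μ.IsReal)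
    (hle : μ.Inversions ⊆ t.Inversions) : μ.Inversions ⊆ (t.realCore hn ht).Inversions := by
  have hclassμ : ∀ {a}, t.IsWaning a → ∀ c, μ.IsWaning c → c ≡ a [ZMOD n] := fun ha c hc =>
    hclass c _ (hle (show (c, c + (n : ℤ)) ∈ μ.Inversions from ⟨by omega, hc⟩)).2 ha
  have not_rel_of_add_le : ∀ {a b}, t.IsWaning a → a + n ≤ b → ¬ μ.rel b a := by
    intro a b ha hb hba
    have hμa : μ.IsWaning a := hμ.rel_of_lt_of_le (by omega) hb hba
    have hconv := (hμ.orderConvex_residueClass_iff hn hμa).mpr (hclassμ ha)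
    have := μ.antisymm _ _ (hreal a hconv) hμa
    omega
  rintro ⟨a, b⟩ hmem
  obtain ⟨hab, htba⟩ := hle hmem
  have hba : μ.rel b a := hmem.2
  refine ⟨hab, ?_⟩
  dsimp only at hab hba htba ⊢
  by_cases ha : t.IsWaning a <;> by_cases hb : t.IsWaning b <;>
    simp only [realCore, realCoreRel, ha, hb, if_true, if_false]
  · exact absurd hba (not_rel_of_add_le ha (t.add_le_of_isWaning hclass ha hb hab))
  · by_contra! h
    exact not_rel_of_add_le ha h hba
  · have hab' := ht.rel_of_isWaning_between hn hb ha hab le_rfl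
    have := t.antisymm _ _ hab' htba
    omega
  · exact htba

end realCore

end TITO

theorem stmt8 (n : ℕ) (hn : 2 ≤ n) (t : TITO n) (ht : t.Avoids312) :
    ∃ μ₀ : TITO n, μ₀.Avoids312 ∧ μ₀.IsReal ∧ μ₀.Inversions ⊆ t.Inversions ∧
      ∀ μ : TITO n, μ.Avoids312 → μ.IsReal → μ.Inversions ⊆ t.Inversions →
        μ.Inversions ⊆ μ₀.Inversions := by
  have hn0 : 0 < n := by omega
  rcases ht.isReal_or_modEq_of_isWaning hn0 with hreal | hclass
  · exact ⟨t, ht, hreal, subset_rfl, fun _ _ _ hle => hle⟩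
  · exact ⟨t.realCore hn0 ht, TITO.realCore_avoids312 hn0 ht hclass,
      TITO.realCore_isReal hn0 ht, TITO.inversions_realCore_subset hn0 ht,
      fun _ hμ hreal hle => TITO.inversions_subset_realCore hn0 ht hclass hμ hreal hle⟩
end

section
/- A 312-avoiding TITO is determined by its set of lower walls: if ≼₁ and ≼₂ are 312-avoiding TITOs whose sets of lower walls coincide, then ≼₁ = ≼₂. -/
section Aux

variable {n : ℕ}

/-- Downward closure of inversions for a 312-avoiding TITO. -/
lemma tito_closure (t : TITO n) (ht : t.Avoids312) {a y c : ℤ}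
    (hay : a < y) (hyc : y < c) (hca : t.rel c a) : t.rel y a := by
  rcases t.total y a with h | h
  · exact h
  · exact absurd ⟨a, y, c, hay, hyc, hca, h⟩ ht

lemma tito_finset_max (t : TITO n) (s : Finset ℤ) :
    s.Nonempty → ∃ m ∈ s, ∀ z ∈ s, t.rel z m := by
  induction s using Finset.induction_on with
  | empty => intro hs; exact absurd hs (by simp)
  | @insert a s ha ih =>
    intro _
    rcases s.eq_empty_or_nonempty with rfl | hs'
    · exact ⟨a, by simp, by simp [t.refl]⟩
    · obtain ⟨m, hm, hmax⟩ := ih hs'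
      rcases t.total a m with h | h
      · refine ⟨m, Finset.mem_insert_of_mem hm, ?_⟩
        intro z hz
        rcases Finset.mem_insert.mp hz with rfl | hz
        · exact h
        · exact hmax z hz
      · refine ⟨a, Finset.mem_insert_self a s, ?_⟩
        intro z hz
        rcases Finset.mem_insert.mp hz with rfl | hz
        · exact t.refl z
        · exact t.trans z m a (hmax z hz) h

lemma tito_set_max (t : TITO n) (S : Set ℤ) (hfin : S.Finite) (hne : S.Nonempty) :
    ∃ m ∈ S, ∀ z ∈ S, t.rel z m := by
  obtain ⟨m, hm, h⟩ := tito_finset_max t hfin.toFinset (by simpa using hne)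
  exact ⟨m, (hfin.mem_toFinset).mp hm, fun z hz => h z (hfin.mem_toFinset.mpr hz)⟩

lemma tito_mkWall (t : TITO n) (ht : t.Avoids312) {a m : ℤ} (ham : a < m) (hma : t.rel m a)
    (h : ∀ z, a < z → t.rel m z → t.rel z a → z = m) : t.LowerWall a m := by
  refine ⟨ham, hma, fun z hza hzm hc => ?_⟩
  obtain ⟨hmz, hza'⟩ := hc
  rcases lt_trichotomy z a with hlt | rfl | hgt
  · exact absurd ⟨z, a, m, hlt, ham, hmz, hza'⟩ ht
  · exact hza rfl
  · exact hzm (h z hgt hmz hza')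

lemma tito_key (hn : 2 ≤ n) (t₁ t₂ : TITO n)
    (h1 : t₁.Avoids312) (h2 : t₂.Avoids312)
    (hw : ∀ a b : ℤ, t₁.LowerWall a b ↔ t₂.LowerWall a b)
    (a b : ℤ) (hab : a < b) (h1ab : t₁.rel b a) (h2ab : ¬ t₂.rel b a)
    (hmin : ∀ c e : ℤ, c < e → e - c < b - a → (t₁.rel e c ↔ t₂.rel e c)) : False := by
  -- In t₂, the inversions at a are exactly (a, b) ∩ ℤ
  have hL2 : ∀ y : ℤ, a < y → (t₂.rel y a ↔ y < b) := by
    intro y hay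
    constructor
    · intro h
      by_contra hyb
      push_neg at hyb
      rcases eq_or_lt_of_le hyb with rfl | hby
      · exact h2ab h
      · exact h2ab (tito_closure t₂ h2 hab hby h)
    · intro hyb
      exact (hmin a y hay (by omega)).mp (tito_closure t₁ h1 hay hyb h1ab)
  by_cases hP : ∀ y : ℤ, a < y → t₁.rel y a
  · -- every integer above a is t₁-below a
    by_cases hb : b = a + 1
    · -- Subcase: b = a + 1.  Use the finite t₁-interval [a + n, a].
      subst hb
      have hAa : a < a + (n : ℤ) := by omega
      have hAn : t₁.rel (a + n) a := hP _ hAa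
      set T : Set ℤ := {z | t₁.rel (a + n) z ∧ t₁.rel z a ∧ z ≠ a} with hT
      have hTsub : T ⊆ Set.Ioc a (a + n) := by
        rintro z ⟨hz1, hz2, hz3⟩
        constructor
        · rcases lt_trichotomy z a with h | h | h
          · exact absurd ⟨z, a, a + n, h, hAa, hz1, hz2⟩ h1
          · exact absurd h hz3
          · exact h
        · by_contra h
          push_neg at h
          have h' : t₁.rel (z - n) a := hP _ (by omega)
          have h'' := (t₁.invariant (z - n) a).mp h'
          rw [show z - (n : ℤ) + n = z from by ring] at h''
          exact (by omega : z ≠ a + n) (t₁.antisymm _ _ h'' hz1)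
      have hTfin : T.Finite := (Set.finite_Ioc a (a + n)).subset hTsub
      have hTne : T.Nonempty := ⟨a + n, t₁.refl _, hAn, by omega⟩
      obtain ⟨m, hmT, hmax⟩ := tito_set_max t₁ T hTfin hTne
      obtain ⟨hm1, hm2, hm3⟩ := hmT
      have ham : a < m := (hTsub ⟨hm1, hm2, hm3⟩).1
      have wall : t₁.LowerWall a m := by
        refine tito_mkWall t₁ h1 ham hm2 ?_
        intro z hz hmz hza
        have hzT : z ∈ T := ⟨t₁.trans _ _ _ hm1 hmz, hza, by omega⟩
        exact t₁.antisymm z m (hmax z hzT) hmz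
      have wall2 := (hw a m).mp wall
      have : m < a + 1 := (hL2 m ham).mp wall2.2.1
      omega
    · -- Subcase: b > a + 1.  Build a wall of t₂ from the t₂-max of (a, b).
      have hb' : a + 1 < b := by omega
      obtain ⟨m, hmS, hmax⟩ := tito_set_max t₂ (Set.Ioo a b) (Set.finite_Ioo a b)
        ⟨a + 1, by constructor <;> omega⟩
      have ham : a < m := hmS.1
      have hmb : m < b := hmS.2
      have hma2 : t₂.rel m a := (hL2 m ham).mpr hmb
      have wall2 : t₂.LowerWall a m := by
        refine tito_mkWall t₂ h2 ham hma2 ?_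
        intro z hz hmz hza
        have hzb : z < b := (hL2 z hz).mp hza
        exact t₂.antisymm z m (hmax z ⟨hz, hzb⟩) hmz
      have wall1 : t₁.LowerWall a m := (hw a m).mpr wall2
      have hmb1 : t₁.rel m b := by
        have h2bm : ¬ t₂.rel b m := fun h => h2ab (t₂.trans _ _ _ h hma2)
        have h1bm : ¬ t₁.rel b m := fun h => h2bm ((hmin m b hmb (by omega)).mp h)
        rcases t₁.total m b with h | h
        · exact h
        · exact absurd h h1bm
      exact wall1.2.2 b (by omega) (by omega) ⟨hmb1, h1ab⟩
  · -- t₁-inversions above a are bounded; use the t₁-max of them.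
    push_neg at hP
    obtain ⟨y₁, hy₁a, hy₁⟩ := hP
    have hby : b < y₁ := by
      rcases lt_trichotomy b y₁ with h | rfl | h
      · exact h
      · exact absurd h1ab hy₁
      · exact absurd (tito_closure t₁ h1 hy₁a h h1ab) hy₁
    set S : Set ℤ := {z | a < z ∧ t₁.rel z a} with hS
    have hSsub : S ⊆ Set.Ioo a y₁ := by
      rintro z ⟨hz1, hz2⟩
      refine ⟨hz1, ?_⟩
      rcases lt_trichotomy z y₁ with h | rfl | h
      · exact h
      · exact absurd hz2 hy₁
      · exact absurd (tito_closure t₁ h1 hy₁a h hz2) hy₁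
    obtain ⟨m, hmS, hmax⟩ := tito_set_max t₁ S ((Set.finite_Ioo a y₁).subset hSsub)
      ⟨b, hab, h1ab⟩
    obtain ⟨ham, hma⟩ := hmS
    have wall1 : t₁.LowerWall a m :=
      tito_mkWall t₁ h1 ham hma (fun z hz hmz hza => t₁.antisymm z m (hmax z ⟨hz, hza⟩) hmz)
    have wall2 := (hw a m).mp wall1
    have hmb : m < b := (hL2 m ham).mp wall2.2.1
    have h1bm : t₁.rel b m := hmax b ⟨hab, h1ab⟩
    have h2bm : t₂.rel b m := (hmin m b hmb (by omega)).mp h1bm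
    exact h2ab (t₂.trans _ _ _ h2bm wall2.2.1)

lemma tito_ext {t₁ t₂ : TITO n} (h : t₁.rel = t₂.rel) : t₁ = t₂ := by
  cases t₁
  cases t₂
  cases h
  rfl

end Aux

theorem stmt12 (n : ℕ) (hn : 2 ≤ n) (t₁ t₂ : TITO n)
    (h1 : t₁.Avoids312) (h2 : t₂.Avoids312)
    (hw : ∀ a b : ℤ, t₁.LowerWall a b ↔ t₂.LowerWall a b) : t₁ = t₂ := by
  have main : ∀ k : ℕ, ∀ a b : ℤ, a < b → (b - a).toNat ≤ k → (t₁.rel b a ↔ t₂.rel b a) := by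
    intro k
    induction k with
    | zero =>
      intro a b hab hk
      exact absurd hk (by omega)
    | succ k ih =>
      intro a b hab hk
      have hmin : ∀ c e : ℤ, c < e → e - c < b - a → (t₁.rel e c ↔ t₂.rel e c) :=
        fun c e hce hd => ih c e hce (by omega)
      constructor
      · intro h
        by_contra h'
        exact tito_key hn t₁ t₂ h1 h2 hw a b hab h h' hmin
      · intro h
        by_contra h'
        exact tito_key hn t₂ t₁ h2 h1 (fun a b => (hw a b).symm) a b hab h h'
          (fun c e u v => (hmin c e u v).symm)
  have hrel : ∀ x y : ℤ, t₁.rel x y ↔ t₂.rel x y := by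
    intro x y
    rcases lt_trichotomy x y with h | rfl | h
    · have hyx := main (y - x).toNat x y h le_rfl
      constructor
      · intro hxy
        rcases t₂.total x y with h' | h'
        · exact h'
        · exact absurd (t₁.antisymm x y hxy (hyx.mpr h')) (by omega)
      · intro hxy
        rcases t₁.total x y with h' | h'
        · exact h'
        · exact absurd (t₂.antisymm x y hxy (hyx.mp h')) (by omega)
    · simp [t₁.refl, t₂.refl]
    · exact main (x - y).toNat y x h le_rfl
  exact tito_ext (funext fun x => funext fun y => propext (hrel x y))
end
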